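/- arXiv:math/9711218 — 8 statements merged into one kernel-verified Lean document; each statement's English description precedes it below -/
import Mathlib

section
/- Let x_1, ..., x_g be variables, p_k the k-th power sum and e_k the k-th elementary symmetric polynomial in ℚ[x_1,...,x_g]. Modulo the ideal generated by the even power sums p_2, p_4, p_6, ..., one has the identity e_{g-1} · e_g ≡ (-1)^{g-1} p_{2g-1}. -/
open MvPolynomial

/-!
Write `E(t) = ∏ (1 + xᵢ t) = ∑ eₖ tᵏ`. Its logarithmic derivative is
`P(t) = ∑ (-1)ᵏ p_{k+1} tᵏ`, and that of `E(t) E(-t)` is the odd part `P(t) - P(-t)`, whose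
coefficients are multiples of even power sums. Over `ℚ` a power series whose derivative has all
coefficients in an ideal is constant modulo that ideal, so `E(t) E(-t) ≡ 1` modulo the even power
sums, and hence `t E'(t) E(-t) ≡ t P(t)`. Comparing coefficients of `t^{2g-1}`, where on the left
only the products `e_{g-1} e_g` survive, gives the claim.
-/

theorem Derivation.map_prod_of_map_eq_mul {R A ι : Type*} [CommSemiring R] [CommSemiring A]
    [Algebra R A] (D : Derivation R A A) {s : Finset ι} {f u : ι → A}
    (h : ∀ i ∈ s, D (f i) = f i * u i) :
    D (∏ i ∈ s, f i) = (∏ i ∈ s, f i) * ∑ i ∈ s, u i := by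
  induction s using Finset.cons_induction with
  | empty => simp
  | cons a s _ ih =>
    rw [Finset.prod_cons, Finset.sum_cons, D.leibniz, smul_eq_mul, smul_eq_mul,
      ih fun i hi => h i (Finset.mem_cons_of_mem hi), h a (Finset.mem_cons_self a s)]
    ring

namespace PowerSeries

open Finset

variable {R : Type*} [CommRing R]

theorem coeff_succ_mem_of_coeff_derivative_mem [Algebra ℚ R] {I : Ideal R} {f : R⟦X⟧}
    (h : ∀ n, coeff n (d⁄dX R f) ∈ I) (n : ℕ) : coeff (n + 1) f ∈ I := by
  have hunit : IsUnit ((n : R) + 1) := by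
    simpa using (isUnit_iff_ne_zero.2 (n.cast_add_one_ne_zero : (n : ℚ) + 1 ≠ 0)).map
      (algebraMap ℚ R)
  rw [← Ideal.mul_unit_mem_iff_mem I hunit, ← coeff_derivative]
  exact h n

theorem coeff_X_mul_derivative (f : R⟦X⟧) (k : ℕ) :
    coeff k (X * d⁄dX R f) = k * coeff k f := by
  cases k with
  | zero => simp
  | succ k => rw [coeff_succ_X_mul, coeff_derivative, mul_comm]; push_cast; rfl

theorem derivative_one_add_C_mul_X (a : R) :
    d⁄dX R (1 + C a * X) = (1 + C a * X) * mk fun k => (-1) ^ k * a ^ (k + 1) := by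
  ext (_ | k)
  · simp
  · simp only [map_add, Derivation.map_one_eq_zero, Derivation.leibniz, derivative_X, smul_eq_mul,
      mul_one, derivative_C, mul_zero, add_zero, zero_add, coeff_succ_C, add_mul, one_mul, mul_assoc,
      coeff_mk, coeff_C_mul, coeff_succ_X_mul]
    ring

variable {σ : Type*} [Fintype σ]

noncomputable def esymmSeries (y : σ → R) : R⟦X⟧ := ∏ i, (1 + C (y i) * X)

noncomputable def psumSeries (y : σ → R) : R⟦X⟧ := mk fun k => (-1) ^ k * ∑ i, y i ^ (k + 1)

theorem coeff_psumSeries (y : σ → R) (k : ℕ) :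
    coeff k (psumSeries y) = (-1) ^ k * ∑ i, y i ^ (k + 1) :=
  coeff_mk _ _

theorem derivative_esymmSeries (y : σ → R) :
    d⁄dX R (esymmSeries y) = esymmSeries y * psumSeries y := by
  rw [esymmSeries, Derivation.map_prod_of_map_eq_mul _ fun i _ => derivative_one_add_C_mul_X (y i)]
  congr 1
  ext k
  simp [coeff_psumSeries, map_sum, mul_sum]

theorem coeff_esymmSeries (y : σ → R) (k : ℕ) :
    coeff k (esymmSeries y) = ∑ t ∈ powersetCard k univ, ∏ i ∈ t, y i := by
  classical
  rw [esymmSeries, prod_one_add, map_sum, powersetCard_eq_filter, sum_filter]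
  refine sum_congr rfl fun t _ => ?_
  rw [prod_mul_distrib, ← map_prod, prod_const, coeff_C_mul_X_pow]
  simp only [eq_comm]

theorem coeff_esymmSeries_X (k : ℕ) :
    coeff k (esymmSeries (MvPolynomial.X : σ → MvPolynomial σ R)) = esymm σ R k :=
  coeff_esymmSeries _ k

theorem coeff_esymmSeries_neg (y : σ → R) (k : ℕ) :
    coeff k (esymmSeries (-y)) = (-1) ^ k * coeff k (esymmSeries y) := by
  rw [coeff_esymmSeries, coeff_esymmSeries, mul_sum]
  refine sum_congr rfl fun t ht => ?_
  rw [← (mem_powersetCard.1 ht).2, ← prod_neg]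
  rfl

theorem coeff_esymmSeries_eq_zero (y : σ → R) {k : ℕ} (hk : Fintype.card σ < k) :
    coeff k (esymmSeries y) = 0 := by
  rw [coeff_esymmSeries, powersetCard_eq_empty.2 (by simpa using hk), sum_empty]

theorem coeff_esymmSeries_mul_esymmSeries_neg_mem [Algebra ℚ R] (y : σ → R) {I : Ideal R}
    (hI : ∀ k, 0 < k → Even k → ∑ i, y i ^ k ∈ I) (n : ℕ) :
    coeff (n + 1) (esymmSeries y * esymmSeries (-y)) ∈ I := by
  refine coeff_succ_mem_of_coeff_derivative_mem (fun k => ?_) n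
  have hderiv : d⁄dX R (esymmSeries y * esymmSeries (-y)) =
      esymmSeries y * esymmSeries (-y) * (psumSeries y + psumSeries (-y)) := by
    rw [Derivation.leibniz, smul_eq_mul, smul_eq_mul, derivative_esymmSeries,
      derivative_esymmSeries]
    ring
  rw [hderiv]
  refine coeff_mul_mem_ideal_of_coeff_right_mem_ideal' (fun j => ?_) k
  rcases Nat.even_or_odd j with hj | hj
  · simp [coeff_psumSeries, hj.neg_one_pow, hj.add_one.neg_pow]
  · have hcoeff : coeff j (psumSeries y + psumSeries (-y)) = -2 * ∑ i, y i ^ (j + 1) := by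
      simp only [map_add, coeff_psumSeries, hj.neg_one_pow, Pi.neg_apply, hj.add_one.neg_pow]
      ring
    rw [hcoeff]
    exact Ideal.mul_mem_left _ _ (hI _ j.succ_pos hj.add_one)

theorem coeff_X_mul_derivative_esymmSeries_mul_esymmSeries_neg (y : σ → R) {m : ℕ}
    (hσ : Fintype.card σ = m + 1) :
    coeff (2 * m + 1) (X * d⁄dX R (esymmSeries y) * esymmSeries (-y)) =
      (-1) ^ m * coeff m (esymmSeries y) * coeff (m + 1) (esymmSeries y) := by
  rw [coeff_mul, sum_eq_add (m, m + 1) (m + 1, m) (by simp)]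
  · simp only [coeff_X_mul_derivative, coeff_esymmSeries_neg]
    push_cast
    ring
  · rintro ⟨a, b⟩ hab hne
    rw [HasAntidiagonal.mem_antidiagonal] at hab
    rcases lt_or_ge (m + 1) a with ha | ha
    · rw [coeff_X_mul_derivative, coeff_esymmSeries_eq_zero y (hσ ▸ ha), mul_zero, zero_mul]
    · rw [coeff_esymmSeries_neg, coeff_esymmSeries_eq_zero y (by grind), mul_zero, mul_zero]
  all_goals intro h; rw [HasAntidiagonal.mem_antidiagonal] at h; omega

theorem neg_one_pow_mul_coeff_esymmSeries_mul_sub_mem [Algebra ℚ R] (y : σ → R) {I : Ideal R}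
    (hI : ∀ k, 0 < k → Even k → ∑ i, y i ^ k ∈ I) {m : ℕ} (hσ : Fintype.card σ = m + 1) :
    (-1) ^ m * coeff m (esymmSeries y) * coeff (m + 1) (esymmSeries y) -
      ∑ i, y i ^ (2 * m + 1) ∈ I := by
  have hQ : ∀ n, coeff n (esymmSeries y * esymmSeries (-y) - 1) ∈ I := by
    rintro (_ | n)
    · simp [esymmSeries]
    · rw [map_sub, coeff_one, if_neg n.succ_ne_zero, sub_zero]
      exact coeff_esymmSeries_mul_esymmSeries_neg_mem y hI n
  have hsplit : X * d⁄dX R (esymmSeries y) * esymmSeries (-y) =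
      X * psumSeries y + X * ((esymmSeries y * esymmSeries (-y) - 1) * psumSeries y) := by
    rw [derivative_esymmSeries]
    ring
  have hcoeff := congrArg (coeff (2 * m + 1)) hsplit
  rw [coeff_X_mul_derivative_esymmSeries_mul_esymmSeries_neg y hσ, map_add, coeff_succ_X_mul,
    coeff_succ_X_mul, coeff_psumSeries, (even_two_mul m).neg_one_pow, one_mul] at hcoeff
  rw [hcoeff, add_sub_cancel_left]
  exact coeff_mul_mem_ideal_of_coeff_left_mem_ideal' hQ (2 * m)

end PowerSeries

/-- Modulo the ideal generated by the even power sums, one has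
`e_{g-1} · e_g ≡ (-1)^{g-1} p_{2g-1}` in `ℚ[x_1,...,x_g]`. -/
theorem esymm_mul_esymm_eq_psum_mod_even_psums (g : ℕ) (hg : 1 ≤ g) :
    esymm (Fin g) ℚ (g - 1) * esymm (Fin g) ℚ g -
      (-1 : MvPolynomial (Fin g) ℚ) ^ (g - 1) * psum (Fin g) ℚ (2 * g - 1) ∈
    Ideal.span {p : MvPolynomial (Fin g) ℚ |
      ∃ k : ℕ, 0 < k ∧ Even k ∧ p = psum (Fin g) ℚ k} := by
  obtain ⟨m, rfl⟩ := Nat.exists_eq_add_of_le' hg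
  have hsign : ((-1 : MvPolynomial (Fin (m + 1)) ℚ) ^ m) ^ 2 = 1 := by
    rw [← pow_mul, pow_mul', neg_one_sq, one_pow]
  rw [Nat.add_sub_cancel, show 2 * (m + 1) - 1 = 2 * m + 1 by omega,
    show esymm (Fin (m + 1)) ℚ m * esymm (Fin (m + 1)) ℚ (m + 1) -
        (-1) ^ m * psum (Fin (m + 1)) ℚ (2 * m + 1) =
      (-1) ^ m * ((-1) ^ m * esymm (Fin (m + 1)) ℚ m * esymm (Fin (m + 1)) ℚ (m + 1) -
        psum (Fin (m + 1)) ℚ (2 * m + 1)) by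
      linear_combination -(esymm (Fin (m + 1)) ℚ m * esymm (Fin (m + 1)) ℚ (m + 1)) * hsign,
    ← PowerSeries.coeff_esymmSeries_X, ← PowerSeries.coeff_esymmSeries_X]
  exact Ideal.mul_mem_left _ _ <| PowerSeries.neg_one_pow_mul_coeff_esymmSeries_mul_sub_mem X
    (fun k hk he => Ideal.subset_span (Set.mem_ofPred.2 ⟨k, hk, he, rfl⟩)) (Fintype.card_fin (m + 1))
end

section
/- Let x_1, ..., x_g be variables and p_k = x_1^k + ... + x_g^k. For every n ≥ 2g, the power sum p_n lies in the ideal of ℚ[x_1,...,x_g] generated by the even power sums p_2, p_4, p_6, .... -/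
/-!
Substituting `x_i ↦ x_i ^ 2` sends `p_k` to `p_{2k}`, so by Newton's identities every elementary
symmetric function of the squares `y_i = x_i ^ 2` lies in the ideal `I` of even power sums. Modulo
`I` the polynomial `∏ (T - y_i)` is then `T ^ g`, and evaluating it at `y_j` gives `x_j ^ (2g) ∈ I`;
every `p_n` with `n ≥ 2g` is a combination of these.
-/

open MvPolynomial

theorem map_multiset_esymm {S T F : Type*} [CommSemiring S] [CommSemiring T] [FunLike F S T]
    [RingHomClass F S T] (f : F) (s : Multiset S) (k : ℕ) :
    f (s.esymm k) = (s.map f).esymm k := by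
  simp [Multiset.esymm, map_multiset_sum, map_multiset_prod, Multiset.powersetCard_map,
    Multiset.map_map]

theorem Multiset.pow_card_eq_zero_of_esymm_eq_zero {S : Type*} [CommRing S] {s : Multiset S}
    (hs : ∀ k, 0 < k → s.esymm k = 0) {a : S} (ha : a ∈ s) : a ^ card s = 0 := by
  have hesymm_zero : s.esymm 0 = 1 := by simp [esymm, powersetCard_zero_left]
  have hprod : (s.map fun t => Polynomial.X - Polynomial.C t).prod = Polynomial.X ^ card s := by
    rw [prod_X_sub_X_eq_sum_esymm, Finset.sum_range_succ']
    simp [hs _ (Nat.succ_pos _), hesymm_zero]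
  have heval := congrArg (Polynomial.eval a) hprod
  rw [Polynomial.eval_multiset_prod, Polynomial.eval_pow, Polynomial.eval_X] at heval
  rw [← heval]
  exact prod_eq_zero (mem_map.2 ⟨_, mem_map_of_mem _ ha, by simp⟩)

theorem Multiset.pow_card_mem_of_esymm_mem {S : Type*} [CommRing S] {I : Ideal S}
    {s : Multiset S} (hs : ∀ k, 0 < k → s.esymm k ∈ I) {a : S} (ha : a ∈ s) :
    a ^ card s ∈ I := by
  rw [← Ideal.Quotient.eq_zero_iff_mem, map_pow, ← card_map (Ideal.Quotient.mk I)]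
  refine pow_card_eq_zero_of_esymm_eq_zero (fun k hk => ?_) (mem_map_of_mem _ ha)
  rw [← map_multiset_esymm, Ideal.Quotient.eq_zero_iff_mem]
  exact hs k hk

namespace MvPolynomial

variable {σ R : Type*} [Fintype σ] [CommRing R]

theorem esymm_mem_span_psum [Algebra ℚ R] {k : ℕ} (hk : 0 < k) :
    esymm σ R k ∈ Ideal.span (Set.range fun j : ℕ => psum σ R (j + 1)) := by
  have hunit : IsUnit (k : MvPolynomial σ R) := by
    simpa using (IsUnit.mk0 (k : ℚ) (by positivity)).map (algebraMap ℚ (MvPolynomial σ R))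
  rw [← Ideal.unit_mul_mem_iff_mem _ hunit, mul_esymm_eq_sum]
  refine Ideal.mul_mem_left _ _ (Ideal.sum_mem _ fun ⟨a, b⟩ hab => Ideal.mul_mem_left _ _ ?_)
  simp only [Finset.mem_filter, Finset.HasAntidiagonal.mem_antidiagonal] at hab
  obtain ⟨j, rfl⟩ : ∃ j, b = j + 1 := Nat.exists_eq_add_one.2 (by omega)
  exact Ideal.subset_span ⟨j, rfl⟩

theorem aeval_X_pow_psum (m k : ℕ) :
    aeval (R := R) (fun i => X i ^ m : σ → MvPolynomial σ R) (psum σ R k) =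
      psum σ R (m * k) := by
  simp [psum, ← pow_mul]

theorem X_pow_mul_card_mem_span_psum_mul [Algebra ℚ R] (m : ℕ) (i : σ) :
    X i ^ (m * Fintype.card σ) ∈
      Ideal.span (Set.range fun j : ℕ => psum σ R (m * (j + 1))) := by
  set φ := aeval (R := R) (fun i => X i ^ m : σ → MvPolynomial σ R)
  have hmap : (Ideal.span (Set.range fun j : ℕ => psum σ R (j + 1))).map φ ≤
      Ideal.span (Set.range fun j : ℕ => psum σ R (m * (j + 1))) := by
    rw [Ideal.map_span, Ideal.span_le]
    rintro _ ⟨_, ⟨j, rfl⟩, rfl⟩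
    exact Ideal.subset_span ⟨j, (aeval_X_pow_psum m _).symm⟩
  have hesymm (k : ℕ) (hk : 0 < k) : (Finset.univ.val.map fun i => X i ^ m).esymm k ∈
      Ideal.span (Set.range fun j : ℕ => psum σ R (m * (j + 1))) := by
    rw [← aeval_esymm_eq_multiset_esymm σ R]
    exact hmap (Ideal.mem_map_of_mem φ (esymm_mem_span_psum hk))
  simpa [← pow_mul] using
    Multiset.pow_card_mem_of_esymm_mem hesymm (Multiset.mem_map_of_mem _ (Finset.mem_univ i))

end MvPolynomial

/-- For every `n ≥ 2g`, the power sum `p_n` lies in the ideal of `ℚ[x_1,...,x_g]`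
generated by the even power sums `p_2, p_4, p_6, ...`. -/
theorem psum_mem_ideal_span_even_psums (g n : ℕ) (hn : 2 * g ≤ n) :
    psum (Fin g) ℚ n ∈
    Ideal.span {p : MvPolynomial (Fin g) ℚ |
      ∃ k : ℕ, 0 < k ∧ Even k ∧ p = psum (Fin g) ℚ k} := by
  have hspan : Ideal.span (Set.range fun j : ℕ => psum (Fin g) ℚ (2 * (j + 1))) ≤
      Ideal.span {p | ∃ k : ℕ, 0 < k ∧ Even k ∧ p = psum (Fin g) ℚ k} := by
    refine Ideal.span_mono ?_
    rintro _ ⟨j, rfl⟩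
    exact ⟨2 * (j + 1), by positivity, even_two_mul _, rfl⟩
  have hX (i : Fin g) := hspan (by simpa using X_pow_mul_card_mem_span_psum_mul (R := ℚ) 2 i)
  have hsplit : psum (Fin g) ℚ n = ∑ i, X i ^ (n - 2 * g) * X i ^ (2 * g) := by
    simp only [psum, ← pow_add, Nat.sub_add_cancel hn]
  rw [hsplit]
  exact Ideal.sum_mem _ fun i _ => Ideal.mul_mem_left _ _ (hX i)
end

section
/- Let x_1,...,x_h and y_1,...,y_{g-h} be two disjoint sets of variables (1 ≤ h ≤ g-1), and suppose all even power sums of the x-variables and all even power sums of the y-variables lie in an ideal I of the polynomial ring ℚ[x_*, y_*]. Then e_{g-1}(x,y) · e_g(x,y) ∈ I, where e_k(x,y) denotes the k-th elementary symmetric polynomial in all g variables. -/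
/-!
Newton's identities put every `e_k`, `k > 0`, into the ideal generated by the positive power
sums. Applied to the squares of the `x`-variables this gives `(x_1 ⋯ x_h)^2 ∈ I`, and likewise
`(y_1 ⋯ y_{g-h})^2 ∈ I`. Every monomial of `e_{g-1}` omits a single variable, so it contains all
the `x`'s or all the `y`'s; multiplied by `e_g = (x_1 ⋯ x_h)(y_1 ⋯ y_{g-h})` it becomes a multiple
of one of these two squares.
-/

open MvPolynomial Finset

/-- Newton's identity writes `k * e_k` as a combination of `p_1, …, p_k`, and `k` is invertible
over `ℚ`. -/
theorem aeval_esymm_mem_of_psum_mem {σ S : Type*} [Fintype σ] [CommRing S] [Algebra ℚ S]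
    (I : Ideal S) (v : σ → S)
    (hv : ∀ k : ℕ, 0 < k → ∑ i, v i ^ k ∈ I) {k : ℕ} (hk : 0 < k) :
    aeval v (esymm σ ℚ k) ∈ I := by
  have hmul : (k : S) * aeval v (esymm σ ℚ k) ∈ I := by
    rw [← map_natCast (aeval (R := ℚ) v), ← map_mul, mul_esymm_eq_sum, map_mul, map_sum]
    refine I.mul_mem_left _ (I.sum_mem fun a ha => ?_)
    rw [mem_filter, HasAntidiagonal.mem_antidiagonal] at ha
    rw [map_mul, psum, map_sum]
    simp only [map_pow, aeval_X]
    exact I.mul_mem_left _ (hv a.2 (by omega))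
  have hk' : (k : ℚ) ≠ 0 := by exact_mod_cast hk.ne'
  have := I.smul_of_tower_mem (k : ℚ)⁻¹ hmul
  rwa [← nsmul_eq_mul, ← Nat.cast_smul_eq_nsmul ℚ, smul_smul, inv_mul_cancel₀ hk', one_smul] at this

theorem MvPolynomial.esymm_card (σ R : Type*) [Fintype σ] [CommSemiring R] :
    esymm σ R (Fintype.card σ) = ∏ i, X i := by
  rw [esymm, ← card_univ, powersetCard_self, sum_singleton]

theorem prod_sq_mem_of_even_psum_mem {σ S : Type*} [Fintype σ] [Nonempty σ] [CommRing S]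
    [Algebra ℚ S]
    (I : Ideal S) (v : σ → S)
    (hv : ∀ k : ℕ, 0 < k → Even k → ∑ i, v i ^ k ∈ I) :
    (∏ i, v i) ^ 2 ∈ I := by
  have := aeval_esymm_mem_of_psum_mem I (v ^ 2) (fun k hk => by
    simpa only [Pi.pow_apply, ← pow_mul] using hv (2 * k) (by omega) (even_two_mul k))
    (Fintype.card_pos (α := σ))
  simpa [esymm_card, prod_pow] using this

theorem Finset.map_inl_subset_or_map_inr_subset {σ τ : Type*} [Fintype σ] [Fintype τ]
    {t : Finset (σ ⊕ τ)} (ht : #t + 1 = Fintype.card (σ ⊕ τ)) :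
    univ.map .inl ⊆ t ∨ univ.map .inr ⊆ t := by
  classical
  obtain ⟨v, hv⟩ : ∃ v, tᶜ = {v} := card_eq_one.mp (by rw [card_compl]; omega)
  have hmem : ∀ w, w ≠ v → w ∈ t := fun w hw => by
    by_contra hwt
    exact hw (mem_singleton.mp (hv ▸ mem_compl.mpr hwt))
  rcases v with _ | _
  · right
    intro w hw
    obtain ⟨b, -, rfl⟩ := mem_map.mp hw
    exact hmem _ Sum.inr_ne_inl
  · left
    intro w hw
    obtain ⟨a, -, rfl⟩ := mem_map.mp hw
    exact hmem _ Sum.inl_ne_inr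

theorem esymm_mul_esymm_succ_mem_of_sq_mem {σ τ R : Type*} [Fintype σ] [Fintype τ]
    [CommSemiring R] (I : Ideal (MvPolynomial (σ ⊕ τ) R)) {k : ℕ}
    (hk : k + 1 = Fintype.card (σ ⊕ τ))
    (hσ : (∏ i, X (R := R) (Sum.inl i)) ^ 2 ∈ I) (hτ : (∏ j, X (R := R) (Sum.inr j)) ^ 2 ∈ I) :
    esymm (σ ⊕ τ) R k * esymm (σ ⊕ τ) R (k + 1) ∈ I := by
  rw [sq] at hσ hτ
  rw [hk, esymm_card, Fintype.prod_sum_type, esymm, sum_mul]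
  refine I.sum_mem fun t ht => ?_
  rw [mem_powersetCard_univ] at ht
  rcases map_inl_subset_or_map_inr_subset (ht ▸ hk) with hs | hs
  · have hdvd := prod_dvd_prod_of_subset _ _ (X (R := R)) hs
    rw [prod_map] at hdvd
    exact I.mem_of_dvd (mul_dvd_mul hdvd (dvd_mul_right _ _)) hσ
  · have hdvd := prod_dvd_prod_of_subset _ _ (X (R := R)) hs
    rw [prod_map] at hdvd
    exact I.mem_of_dvd (mul_dvd_mul hdvd (dvd_mul_left _ _)) hτ

theorem esymm_pred_mul_esymm_top_mem_general (g h : ℕ) (h1 : 1 ≤ h) (h2 : h ≤ g - 1)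
    (I : Ideal (MvPolynomial (Fin h ⊕ Fin (g - h)) ℚ))
    (hx : ∀ k : ℕ, 0 < k → Even k →
      (∑ i : Fin h, (X (Sum.inl i) : MvPolynomial (Fin h ⊕ Fin (g - h)) ℚ) ^ k) ∈ I)
    (hy : ∀ k : ℕ, 0 < k → Even k →
      (∑ j : Fin (g - h), (X (Sum.inr j) : MvPolynomial (Fin h ⊕ Fin (g - h)) ℚ) ^ k) ∈ I) :
    esymm (Fin h ⊕ Fin (g - h)) ℚ (g - 1) * esymm (Fin h ⊕ Fin (g - h)) ℚ g ∈ I := by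
  have : Nonempty (Fin h) := ⟨⟨0, h1⟩⟩
  have : Nonempty (Fin (g - h)) := ⟨⟨0, by omega⟩⟩
  obtain ⟨k, rfl⟩ : ∃ k, g = k + 1 := ⟨g - 1, by omega⟩
  rw [Nat.add_sub_cancel]
  have hcard : k + 1 = Fintype.card (Fin h ⊕ Fin (k + 1 - h)) := by
    simp only [Fintype.card_sum, Fintype.card_fin]
    omega
  exact esymm_mul_esymm_succ_mem_of_sq_mem I hcard
    (prod_sq_mem_of_even_psum_mem I _ hx) (prod_sq_mem_of_even_psum_mem I _ hy)

/-- If all even power sums of the `x`-variables and of the `y`-variables lie in an ideal `I`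
of `ℚ[x_1,...,x_h, y_1,...,y_{g-h}]`, then `e_{g-1} · e_g ∈ I`, where `e_k` is the `k`-th
elementary symmetric polynomial in all `g = h + (g-h)` variables. -/
theorem esymm_pred_mul_esymm_top_mem (g h : ℕ) (h1 : 1 ≤ h) (h2 : h ≤ g - 1) (hg : 2 ≤ g)
    (I : Ideal (MvPolynomial (Fin h ⊕ Fin (g - h)) ℚ))
    (hx : ∀ k : ℕ, 0 < k → Even k →
      (∑ i : Fin h, (X (Sum.inl i) : MvPolynomial (Fin h ⊕ Fin (g - h)) ℚ) ^ k) ∈ I)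
    (hy : ∀ k : ℕ, 0 < k → Even k →
      (∑ j : Fin (g - h), (X (Sum.inr j) : MvPolynomial (Fin h ⊕ Fin (g - h)) ℚ) ^ k) ∈ I) :
    esymm (Fin h ⊕ Fin (g - h)) ℚ (g - 1) * esymm (Fin h ⊕ Fin (g - h)) ℚ g ∈ I :=
  esymm_pred_mul_esymm_top_mem_general g h h1 h2 I hx hy
end

section
/- Let A = ℚ[x, y]/(127x^3 − 2304xy, 113x^4 − 36864y^2), graded with deg x = 1 and deg y = 2. Then A is a graded ℚ-algebra with Hilbert function dim A_0 = 1, dim A_1 = 1, dim A_2 = 2, dim A_3 = 1, dim A_4 = 1, and A_j = 0 for j > 4. Moreover A is Gorenstein with socle in degree 4: for each 0 ≤ i ≤ 4, the multiplication pairing A_i × A_{4-i} → A_4 ≅ ℚ is perfect. -/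
/-!
Write `g₁ = 127 x³ - 2304 x y` and `g₂ = 113 x⁴ - 36864 y²`. Modulo `g₁, g₂` one has
`x y = (127/2304) x³`, `x² y = (127/2304) x⁴`, `y² = (113/36864) x⁴`, and the identity
`143 x⁵ = -(127 x² + 2304 y) g₁ + 144 x g₂` makes every monomial of weight `≥ 5` vanish, so the
graded pieces `A₀, …, A₄` are spanned by `1; x; x², y; x³; x⁴`.

The linear form on `ℚ[x, y]` sending `x⁴ ↦ 1`, `x² y ↦ 127/2304`, `y² ↦ 113/36864` and every other
monomial to `0` (the values are forced by the relations once `x⁴ ↦ 1`) vanishes on the ideal, hence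
descends to a socle functional `∫ : A → ℚ`. For each `i ≤ 4` the Gram matrix `(∫ uⱼ vₖ)` of the
spanning families `u` of `A_i` and `v` of `A_{4-i}` has nonzero determinant (`1`, and `143/2304²`
for `i = 2`), which makes the families linearly independent and the pairing perfect at once.
-/

open MvPolynomial

section Gram

variable {K A ι : Type*} [Field K] [Ring A] [Algebra K A] (φ : A →ₗ[K] K) (u v : ι → A)

def gramMatrix : Matrix ι ι K :=
  Matrix.of fun i j => φ (u i * v j)

@[simp]
theorem gramMatrix_apply (i j : ι) : gramMatrix φ u v i j = φ (u i * v j) := rfl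

variable [Fintype ι] [DecidableEq ι]

theorem eq_zero_of_det_gram_ne_zero (hdet : (gramMatrix φ u v).det ≠ 0)
    {c : ι → K} (hc : ∀ j, φ ((∑ i, c i • u i) * v j) = 0) : c = 0 := by
  refine Matrix.eq_zero_of_vecMul_eq_zero hdet (funext fun j => ?_)
  simpa [Matrix.vecMul, dotProduct, Finset.sum_mul, smul_mul_assoc] using hc j

theorem linearIndependent_of_det_gram_ne_zero
    (hdet : (gramMatrix φ u v).det ≠ 0) : LinearIndependent K u :=
  Fintype.linearIndependent_iff.2 fun c hc =>
    congrFun (eq_zero_of_det_gram_ne_zero φ u v hdet (by simp [hc]))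

theorem eq_zero_of_mem_span_of_det_gram_ne_zero
    (hdet : (gramMatrix φ u v).det ≠ 0) {a : A}
    (ha : a ∈ Submodule.span K (Set.range u)) (hav : ∀ j, a * v j = 0) : a = 0 := by
  obtain ⟨c, rfl⟩ := Submodule.mem_span_range_iff_exists_fun K |>.1 ha
  simp [eq_zero_of_det_gram_ne_zero φ u v hdet (c := c) (by simp [hav])]

end Gram

theorem weightedHomogeneousSubmodule_eq_span_monomial {σ R M : Type*} [CommSemiring R]
    [AddCommMonoid M] (w : σ → M) (m : M) :
    weightedHomogeneousSubmodule R w m =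
      Submodule.span R ((monomial · 1) '' {d | Finsupp.weight w d = m}) :=
  (weightedHomogeneousSubmodule_eq_finsupp_supported R w m).trans (restrictSupport_eq_span R _)

noncomputable section

namespace GenusSix

section Relations

variable {R : Type*} [CommRing R] [Algebra ℚ R] {x y : R}

theorem mul_eq_smul_pow_three (h₁ : 127 * x ^ 3 = 2304 * x * y) :
    x * y = (127 / 2304 : ℚ) • x ^ 3 := by
  linear_combination (norm := algebra) (-1 / 2304 : ℚ) • h₁

theorem sq_mul_eq_smul_pow_four (h₁ : 127 * x ^ 3 = 2304 * x * y) :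
    x ^ 2 * y = (127 / 2304 : ℚ) • x ^ 4 := by
  linear_combination (norm := algebra) (-1 / 2304 : ℚ) • (x * h₁)

theorem sq_eq_smul_pow_four (h₂ : 113 * x ^ 4 = 36864 * y ^ 2) :
    y ^ 2 = (113 / 36864 : ℚ) • x ^ 4 := by
  linear_combination (norm := algebra) (-1 / 36864 : ℚ) • h₂

theorem pow_mul_pow_eq_zero (h₁ : 127 * x ^ 3 = 2304 * x * y) (h₂ : 113 * x ^ 4 = 36864 * y ^ 2)
    {a b : ℕ} (hab : 5 ≤ a + 2 * b) : x ^ a * y ^ b = 0 := by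
  have x5 : x ^ 5 = 0 := by
    linear_combination (norm := algebra)
      (1 / 143 : ℚ) • (-(127 * x ^ 2 + 2304 * y) * h₁ + 144 * x * h₂)
  have x3y : x ^ 3 * y = 0 := by
    linear_combination (norm := algebra) (1 / 2304 : ℚ) • (-x ^ 2 * h₁ + 127 * x5)
  rcases b with _ | _ | _ | b
  · obtain ⟨k, rfl⟩ := Nat.exists_eq_add_of_le' (show 5 ≤ a by omega)
    simp [pow_add, x5]
  · obtain ⟨k, rfl⟩ := Nat.exists_eq_add_of_le' (show 3 ≤ a by omega)
    simp [pow_add, x3y, mul_assoc]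
  · obtain ⟨k, rfl⟩ := Nat.exists_eq_add_of_le' (show 1 ≤ a by omega)
    linear_combination (norm := algebra) (1 / 36864 : ℚ) • (x ^ k * (-x * h₂ + 113 * x5))
  · linear_combination (norm := algebra)
      (1 / 36864 : ℚ) • (x ^ a * y ^ (b + 1) * (-h₂) + 113 * x ^ (a + 1) * y ^ b * x3y)

end Relations

abbrev S : Type := MvPolynomial (Fin 2) ℚ

def relations : Ideal S :=
  Ideal.span {127 * X 0 ^ 3 - 2304 * X 0 * X 1, 113 * X 0 ^ 4 - 36864 * X 1 ^ 2}

abbrev A : Type := S ⧸ relations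

def x : A := Ideal.Quotient.mk relations (X 0)

def y : A := Ideal.Quotient.mk relations (X 1)

def grade (j : ℕ) : Submodule ℚ A :=
  Submodule.map (Ideal.Quotient.mkₐ ℚ relations).toLinearMap
    (weightedHomogeneousSubmodule ℚ ![1, 2] j)

theorem relation₁ : 127 * x ^ 3 = 2304 * x * y := by
  have : Ideal.Quotient.mk relations (127 * X 0 ^ 3 - 2304 * X 0 * X 1) = 0 :=
    Ideal.Quotient.eq_zero_iff_mem.2 (Ideal.subset_span (by simp))
  simpa [sub_eq_zero, x, y, map_ofNat] using this

theorem relation₂ : 113 * x ^ 4 = 36864 * y ^ 2 := by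
  have : Ideal.Quotient.mk relations (113 * X 0 ^ 4 - 36864 * X 1 ^ 2) = 0 :=
    Ideal.Quotient.eq_zero_iff_mem.2 (Ideal.subset_span (by simp))
  simpa [sub_eq_zero, x, y, map_ofNat] using this

theorem x_pow_mul_y_pow_mem_grade (a b : ℕ) : x ^ a * y ^ b ∈ grade (a + 2 * b) := by
  refine ⟨X 0 ^ a * X 1 ^ b, ?_, by simp [x, y]⟩
  convert ((isWeightedHomogeneous_X ℚ ![1, 2] 0).pow a).mul
    ((isWeightedHomogeneous_X ℚ ![1, 2] 1).pow b) using 1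
  simp [mul_comm]

theorem grade_le_iff {j : ℕ} {N : Submodule ℚ A} :
    grade j ≤ N ↔ ∀ a b, a + 2 * b = j → x ^ a * y ^ b ∈ N := by
  refine ⟨fun h a b hab => h (hab ▸ x_pow_mul_y_pow_mem_grade a b), fun h => ?_⟩
  rw [grade, weightedHomogeneousSubmodule_eq_span_monomial, Submodule.map_span,
    Submodule.span_le]
  rintro _ ⟨_, ⟨d, hd, rfl⟩, rfl⟩
  convert h (d 0) (d 1) ?_ using 1
  · simp [monomial_eq, Finsupp.prod_fintype, x, y]
  · simpa [Finsupp.weight_apply, Finsupp.sum_fintype, mul_comm] using hd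

theorem grade_eq_bot {j : ℕ} (hj : 4 < j) : grade j = ⊥ :=
  eq_bot_iff.2 <| grade_le_iff.2 fun a b hab =>
    by simp [pow_mul_pow_eq_zero relation₁ relation₂ (show 5 ≤ a + 2 * b by omega)]

theorem grade_zero : grade 0 = Submodule.span ℚ (Set.range ![1]) := by
  refine le_antisymm (grade_le_iff.2 fun a b hab => ?_) (Submodule.span_le.2 ?_)
  · obtain ⟨rfl, rfl⟩ : a = 0 ∧ b = 0 := by omega
    simp
  · simpa using x_pow_mul_y_pow_mem_grade 0 0

theorem grade_one : grade 1 = Submodule.span ℚ (Set.range ![x]) := by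
  refine le_antisymm (grade_le_iff.2 fun a b hab => ?_) (Submodule.span_le.2 ?_)
  · obtain ⟨rfl, rfl⟩ : a = 1 ∧ b = 0 := by omega
    simp
  · simpa using x_pow_mul_y_pow_mem_grade 1 0

theorem grade_two : grade 2 = Submodule.span ℚ (Set.range ![x ^ 2, y]) := by
  refine le_antisymm (grade_le_iff.2 fun a b hab => ?_) (Submodule.span_le.2 ?_)
  · obtain ⟨rfl, rfl⟩ | ⟨rfl, rfl⟩ : a = 2 ∧ b = 0 ∨ a = 0 ∧ b = 1 := by omega
    · exact Submodule.subset_span ⟨0, by simp⟩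
    · exact Submodule.subset_span ⟨1, by simp⟩
  · refine Set.range_subset_iff.2 (Fin.forall_fin_two.2 ⟨?_, ?_⟩)
    · simpa using x_pow_mul_y_pow_mem_grade 2 0
    · simpa using x_pow_mul_y_pow_mem_grade 0 1

theorem grade_three : grade 3 = Submodule.span ℚ (Set.range ![x ^ 3]) := by
  have hx3 : x ^ 3 ∈ Submodule.span ℚ (Set.range ![x ^ 3]) := by simp
  refine le_antisymm (grade_le_iff.2 fun a b hab => ?_) (Submodule.span_le.2 ?_)
  · obtain ⟨rfl, rfl⟩ | ⟨rfl, rfl⟩ : a = 3 ∧ b = 0 ∨ a = 1 ∧ b = 1 := by omega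
    · simp
    · simpa [mul_eq_smul_pow_three relation₁] using Submodule.smul_mem _ _ hx3
  · simpa using x_pow_mul_y_pow_mem_grade 3 0

theorem grade_four : grade 4 = Submodule.span ℚ (Set.range ![x ^ 4]) := by
  have hx4 : x ^ 4 ∈ Submodule.span ℚ (Set.range ![x ^ 4]) := by simp
  refine le_antisymm (grade_le_iff.2 fun a b hab => ?_) (Submodule.span_le.2 ?_)
  · obtain ⟨rfl, rfl⟩ | ⟨rfl, rfl⟩ | ⟨rfl, rfl⟩ :
        a = 4 ∧ b = 0 ∨ a = 2 ∧ b = 1 ∨ a = 0 ∧ b = 2 := by omega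
    · simp
    · simpa [sq_mul_eq_smul_pow_four relation₁] using Submodule.smul_mem _ _ hx4
    · simpa [sq_eq_smul_pow_four relation₂] using Submodule.smul_mem _ _ hx4
  · simpa using x_pow_mul_y_pow_mem_grade 4 0

def socleValue : ℕ → ℕ → ℚ
  | 4, 0 => 1
  | 2, 1 => 127 / 2304
  | 0, 2 => 113 / 36864
  | _, _ => 0

theorem socleValue_relation₁ (a b : ℕ) :
    127 * socleValue (a + 3) b = 2304 * socleValue (a + 1) (b + 1) := by
  rcases a with _ | _ | a <;> rcases b with _ | _ | b <;> simp [socleValue]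
  norm_num

theorem socleValue_relation₂ (a b : ℕ) :
    113 * socleValue (a + 4) b = 36864 * socleValue a (b + 2) := by
  rcases a with _ | _ | _ | _ | _ | a <;> rcases b with _ | b <;> simp [socleValue]
  norm_num

def socleFunctional : S →ₗ[ℚ] ℚ :=
  (basisMonomials (Fin 2) ℚ).constr ℚ fun d => socleValue (d 0) (d 1)

theorem socleFunctional_monomial_mul (m : Fin 2 →₀ ℕ) (c : ℚ) (i j : ℕ) :
    socleFunctional (monomial m c * (X 0 ^ i * X 1 ^ j)) =
      c * socleValue (m 0 + i) (m 1 + j) := by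
  have : monomial m c * (X 0 ^ i * X 1 ^ j) =
      c • basisMonomials (Fin 2) ℚ (m + Finsupp.single 0 i + Finsupp.single 1 j) := by
    simp [coe_basisMonomials, smul_monomial, X_pow_eq_monomial, monomial_mul, add_assoc]
  rw [this, map_smul, socleFunctional, Module.Basis.constr_basis, smul_eq_mul]
  simp

theorem socleFunctional_mul_relation₁ (q : S) :
    socleFunctional (q * (127 * X 0 ^ 3 - 2304 * X 0 * X 1)) = 0 := by
  induction q using MvPolynomial.induction_on' with
  | monomial m c =>
    have : monomial m c * (127 * X 0 ^ 3 - 2304 * X 0 * X 1) =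
        (127 : ℚ) • (monomial m c * (X 0 ^ 3 * X 1 ^ 0)) -
          (2304 : ℚ) • (monomial m c * (X 0 ^ 1 * X 1 ^ 1)) := by
      algebra
    rw [this, map_sub, map_smul, map_smul, socleFunctional_monomial_mul,
      socleFunctional_monomial_mul]
    linear_combination c * socleValue_relation₁ (m 0) (m 1)
  | add p q hp hq => rw [add_mul, map_add, hp, hq, add_zero]

theorem socleFunctional_mul_relation₂ (q : S) :
    socleFunctional (q * (113 * X 0 ^ 4 - 36864 * X 1 ^ 2)) = 0 := by
  induction q using MvPolynomial.induction_on' with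
  | monomial m c =>
    have : monomial m c * (113 * X 0 ^ 4 - 36864 * X 1 ^ 2) =
        (113 : ℚ) • (monomial m c * (X 0 ^ 4 * X 1 ^ 0)) -
          (36864 : ℚ) • (monomial m c * (X 0 ^ 0 * X 1 ^ 2)) := by
      algebra
    rw [this, map_sub, map_smul, map_smul, socleFunctional_monomial_mul,
      socleFunctional_monomial_mul]
    linear_combination c * socleValue_relation₂ (m 0) (m 1)
  | add p q hp hq => rw [add_mul, map_add, hp, hq, add_zero]

theorem relations_le_ker_socleFunctional :
    relations.restrictScalars ℚ ≤ LinearMap.ker socleFunctional := by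
  intro p hp
  obtain ⟨a, b, rfl⟩ := Submodule.mem_span_pair.1 hp
  simp [socleFunctional_mul_relation₁, socleFunctional_mul_relation₂]

def socle : A →ₗ[ℚ] ℚ :=
  (relations.restrictScalars ℚ).liftQ socleFunctional relations_le_ker_socleFunctional ∘ₗ
    (Submodule.Quotient.restrictScalarsEquiv ℚ relations).symm.toLinearMap

theorem socle_mk (p : S) : socle (Ideal.Quotient.mk relations p) = socleFunctional p := rfl

theorem socle_x_pow_four : socle (x ^ 4) = 1 := by
  rw [x, ← map_pow, socle_mk]
  simpa [socleValue] using socleFunctional_monomial_mul 0 1 4 0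

theorem finrank_grade_and_pairing {i n : ℕ} {u v : Fin n → A}
    (hu : grade i = Submodule.span ℚ (Set.range u))
    (hv : grade (4 - i) = Submodule.span ℚ (Set.range v))
    (hdet : (gramMatrix socle u v).det ≠ 0) :
    Module.finrank ℚ (grade i) = n ∧
      ∀ a ∈ grade i, (∀ b ∈ grade (4 - i), a * b = 0) → a = 0 := by
  refine ⟨?_, fun a ha hab => ?_⟩
  · rw [hu, finrank_span_eq_card (linearIndependent_of_det_gram_ne_zero socle u v hdet),
      Fintype.card_fin]
  · refine eq_zero_of_mem_span_of_det_gram_ne_zero socle u v hdet (hu ▸ ha) fun k => hab _ ?_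
    exact hv ▸ Submodule.subset_span (Set.mem_range_self k)

theorem det_gram_grade_two :
    (gramMatrix socle ![x ^ 2, y] ![x ^ 2, y]).det = 143 / 2304 ^ 2 := by
  have hxy : x ^ 2 * y = (127 / 2304 : ℚ) • x ^ 4 := sq_mul_eq_smul_pow_four relation₁
  simp [Matrix.det_fin_two, ← sq, ← pow_mul, mul_comm y, hxy, sq_eq_smul_pow_four relation₂,
    socle_x_pow_four]
  norm_num

end GenusSix

end

/-- The tautological ring `R^*(M_6) = ℚ[x,y]/(127x³−2304xy, 113x⁴−36864y²)` with
`deg x = 1`, `deg y = 2` has Hilbert function `1,1,2,1,1`, vanishes above degree 4,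
and is Gorenstein with socle in degree 4: the pairing `A_i × A_{4-i} → A_4 ≅ ℚ` is
perfect (nondegenerate) for all `0 ≤ i ≤ 4`. -/
theorem genus_six_tautological_ring_gorenstein :
    let S := MvPolynomial (Fin 2) ℚ
    let x : S := X 0
    let y : S := X 1
    let I : Ideal S := Ideal.span {127 * x ^ 3 - 2304 * x * y, 113 * x ^ 4 - 36864 * y ^ 2}
    let w : Fin 2 → ℕ := ![1, 2]
    let Agr : ℕ → Submodule ℚ (S ⧸ I) := fun j =>
      Submodule.map (Ideal.Quotient.mkₐ ℚ I).toLinearMap (weightedHomogeneousSubmodule ℚ w j)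
    (Module.finrank ℚ (Agr 0) = 1 ∧ Module.finrank ℚ (Agr 1) = 1 ∧
      Module.finrank ℚ (Agr 2) = 2 ∧ Module.finrank ℚ (Agr 3) = 1 ∧
      Module.finrank ℚ (Agr 4) = 1) ∧
    (∀ j : ℕ, 4 < j → Agr j = ⊥) ∧
    (∀ i : ℕ, i ≤ 4 → ∀ a ∈ Agr i, (∀ b ∈ Agr (4 - i), a * b = 0) → a = 0) := by
  intro S x y I w Agr
  rw [show Agr = GenusSix.grade from rfl]
  open GenusSix in
  · have h0 := finrank_grade_and_pairing (i := 0) grade_zero grade_four (by simp [socle_x_pow_four])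
    have h1 := finrank_grade_and_pairing (i := 1) grade_one grade_three
      (by simp [← pow_succ', socle_x_pow_four])
    have h2 := finrank_grade_and_pairing (i := 2) grade_two grade_two
      (by norm_num [det_gram_grade_two])
    have h3 := finrank_grade_and_pairing (i := 3) grade_three grade_one
      (by simp [← pow_succ, socle_x_pow_four])
    have h4 := finrank_grade_and_pairing (i := 4) grade_four grade_zero (by simp [socle_x_pow_four])
    refine ⟨⟨h0.1, h1.1, h2.1, h3.1, h4.1⟩, fun j => grade_eq_bot, fun i hi => ?_⟩
    interval_cases i
    exacts [h0.2, h1.2, h2.2, h3.2, h4.2]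
end

section
/- Let A = ℚ[x, y]/(127x^3 − 2304xy, 113x^4 − 36864y^2) with deg x = 1, deg y = 2 (so A is graded with top nonzero degree 4). Then multiplication by x^{4-2i} gives an isomorphism A_i → A_{4-i} for i = 0, 1, 2; in particular x^4 ≠ 0 in A. -/
open MvPolynomial Finsupp

namespace G6

noncomputable abbrev S := MvPolynomial (Fin 2) ℚ
noncomputable def xx : S := X 0
noncomputable def yy : S := X 1
noncomputable def g1 : S := 127 * xx ^ 3 - 2304 * xx * yy
noncomputable def g2 : S := 113 * xx ^ 4 - 36864 * yy ^ 2
noncomputable def II : Ideal S := Ideal.span {g1, g2}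

/-- exponent finsupp -/
noncomputable def E (a b : ℕ) : Fin 2 →₀ ℕ := Finsupp.single 0 a + Finsupp.single 1 b

@[simp] lemma E_apply0 (a b : ℕ) : E a b 0 = a := by simp [E]
@[simp] lemma E_apply1 (a b : ℕ) : E a b 1 = b := by simp [E]

lemma eq_E (d : Fin 2 →₀ ℕ) : d = E (d 0) (d 1) := by
  ext i
  fin_cases i <;> simp

lemma E_inj {a b c d : ℕ} (h : E a b = E c d) : a = c ∧ b = d := by
  constructor
  · simpa using DFunLike.congr_fun h 0
  · simpa using DFunLike.congr_fun h 1

lemma E_le {a b c d : ℕ} : E a b ≤ E c d ↔ a ≤ c ∧ b ≤ d := by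
  constructor
  · intro h
    exact ⟨by simpa using h 0, by simpa using h 1⟩
  · intro ⟨h1, h2⟩ i
    fin_cases i <;> simpa

lemma E_sub {a b c d : ℕ} : E c d - E a b = E (c - a) (d - b) := by
  ext i
  fin_cases i <;> simp [Finsupp.tsub_apply]

lemma weight_E (a b : ℕ) : (weight ![1, 2] : (Fin 2 →₀ ℕ) →+ ℕ) (E a b) = a + 2 * b := by
  rw [weight_apply, Finsupp.sum_fintype _ _ (fun i => by simp)]
  simp [Fin.sum_univ_two, mul_comm]

end G6

namespace G6

lemma g1_eq : g1 = monomial (E 3 0) 127 - monomial (E 1 1) 2304 := by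
  have h1 : (127 : S) = C (127 : ℚ) := (map_ofNat (C : ℚ →+* S) 127).symm
  have h2 : (2304 : S) = C (2304 : ℚ) := (map_ofNat (C : ℚ →+* S) 2304).symm
  rw [g1, h1, h2]
  simp [xx, yy, E, X_pow_eq_monomial, X, monomial_mul, monomial_pow, C_mul_monomial,
    Finsupp.smul_single]

lemma g2_eq : g2 = monomial (E 4 0) 113 - monomial (E 0 2) 36864 := by
  have h1 : (113 : S) = C (113 : ℚ) := (map_ofNat (C : ℚ →+* S) 113).symm
  have h2 : (36864 : S) = C (36864 : ℚ) := (map_ofNat (C : ℚ →+* S) 36864).symm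
  rw [g2, h1, h2]
  simp [xx, yy, E, X_pow_eq_monomial, X, monomial_mul, monomial_pow, C_mul_monomial,
    Finsupp.smul_single]

lemma coeff_mul_E (p : S) (a b c d : ℕ) (r : ℚ) :
    coeff (E c d) (p * monomial (E a b) r) =
      if a ≤ c ∧ b ≤ d then coeff (E (c - a) (d - b)) p * r else 0 := by
  rw [coeff_mul_monomial']
  by_cases h : a ≤ c ∧ b ≤ d
  · rw [if_pos (E_le.mpr h), if_pos h, E_sub]
  · rw [if_neg (fun hle => h (E_le.mp hle)), if_neg h]

lemma lam4 {f : S} (hf : f ∈ II) :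
    36864 * coeff (E 4 0) f + 2032 * coeff (E 2 1) f + 113 * coeff (E 0 2) f = 0 := by
  rw [II, Ideal.mem_span_pair] at hf
  obtain ⟨p, q, rfl⟩ := hf
  rw [g1_eq, g2_eq]
  simp only [mul_sub, coeff_add, coeff_sub, coeff_mul_E]
  norm_num
  ring

lemma lam3 {f : S} (hf : f ∈ II) :
    2304 * coeff (E 3 0) f + 127 * coeff (E 1 1) f = 0 := by
  rw [II, Ideal.mem_span_pair] at hf
  obtain ⟨p, q, rfl⟩ := hf
  rw [g1_eq, g2_eq]
  simp only [mul_sub, coeff_add, coeff_sub, coeff_mul_E]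
  norm_num
  ring

end G6

namespace G6

lemma E_eq_iff {a b c d : ℕ} : E a b = E c d ↔ a = c ∧ b = d := by
  constructor
  · exact E_inj
  · rintro ⟨rfl, rfl⟩; rfl

lemma deg_eq {p : S} {n : ℕ} (h : p.IsWeightedHomogeneous ![1, 2] n) {d : Fin 2 →₀ ℕ}
    (h0 : coeff d p ≠ 0) : d 0 + 2 * d 1 = n := by
  have hw := h h0
  rw [← weight_E (d 0) (d 1), ← eq_E d]
  exact hw

lemma hom0 {p : S} (h : p.IsWeightedHomogeneous ![1, 2] 0) :
    p = monomial (E 0 0) (coeff (E 0 0) p) := by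
  ext d
  by_cases h0 : coeff d p = 0
  · rw [coeff_monomial]
    split_ifs with h1
    · rw [h1]
    · exact h0
  · have hd := deg_eq h h0
    have : d = E 0 0 := by
      have ha : d 0 = 0 := by omega
      have hb : d 1 = 0 := by omega
      conv_lhs => rw [eq_E d]
      rw [ha, hb]
    subst this
    simp [coeff_monomial]

lemma hom1 {p : S} (h : p.IsWeightedHomogeneous ![1, 2] 1) :
    p = monomial (E 1 0) (coeff (E 1 0) p) := by
  ext d
  by_cases h0 : coeff d p = 0
  · rw [coeff_monomial]
    split_ifs with h1
    · rw [h1]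
    · exact h0
  · have hd := deg_eq h h0
    have : d = E 1 0 := by
      have ha : d 0 = 1 := by omega
      have hb : d 1 = 0 := by omega
      conv_lhs => rw [eq_E d]
      rw [ha, hb]
    subst this
    simp [coeff_monomial]

lemma hom3 {p : S} (h : p.IsWeightedHomogeneous ![1, 2] 3) :
    p = monomial (E 3 0) (coeff (E 3 0) p) + monomial (E 1 1) (coeff (E 1 1) p) := by
  ext d
  rw [coeff_add, coeff_monomial, coeff_monomial]
  by_cases h0 : coeff d p = 0
  · split_ifs with h1 h2 h2 <;> simp_all
  · have hd := deg_eq h h0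
    have : d = E 3 0 ∨ d = E 1 1 := by
      have : d 1 = 0 ∧ d 0 = 3 ∨ d 1 = 1 ∧ d 0 = 1 := by omega
      rcases this with ⟨ha, hb⟩ | ⟨ha, hb⟩
      · left; conv_lhs => rw [eq_E d]
        rw [ha, hb]
      · right; conv_lhs => rw [eq_E d]
        rw [ha, hb]
    rcases this with h1 | h1 <;> subst h1 <;> simp [E_eq_iff]

lemma hom4 {p : S} (h : p.IsWeightedHomogeneous ![1, 2] 4) :
    p = monomial (E 4 0) (coeff (E 4 0) p) + monomial (E 2 1) (coeff (E 2 1) p)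
      + monomial (E 0 2) (coeff (E 0 2) p) := by
  ext d
  rw [coeff_add, coeff_add, coeff_monomial, coeff_monomial, coeff_monomial]
  by_cases h0 : coeff d p = 0
  · split_ifs <;> simp_all
  · have hd := deg_eq h h0
    have : d = E 4 0 ∨ d = E 2 1 ∨ d = E 0 2 := by
      have : d 1 = 0 ∧ d 0 = 4 ∨ d 1 = 1 ∧ d 0 = 2 ∨ d 1 = 2 ∧ d 0 = 0 := by omega
      rcases this with ⟨ha, hb⟩ | ⟨ha, hb⟩ | ⟨ha, hb⟩
      · left; conv_lhs => rw [eq_E d]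
        rw [ha, hb]
      · right; left; conv_lhs => rw [eq_E d]
        rw [ha, hb]
      · right; right; conv_lhs => rw [eq_E d]
        rw [ha, hb]
    rcases this with h1 | h1 | h1 <;> subst h1 <;> simp [E_eq_iff]

end G6

namespace G6

lemma mon_mul_mon (a b a' b' : ℕ) (r r' : ℚ) :
    monomial (E a b) r * monomial (E a' b') r' = monomial (E (a + a') (b + b')) (r * r') := by
  have hE : E a b + E a' b' = E (a + a') (b + b') := by
    ext i
    fin_cases i <;> simp [E]
  rw [monomial_mul, hE]

lemma xx_pow_eq (k : ℕ) : xx ^ k = monomial (E k 0) 1 := by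
  have hE : Finsupp.single (0 : Fin 2) k = E k 0 := by
    ext i
    fin_cases i <;> simp [E]
  rw [xx, X_pow_eq_monomial, hE]

lemma xx2_mon (r : ℚ) : xx ^ 2 * monomial (E 1 0) r = monomial (E 3 0) r := by
  rw [xx_pow_eq, mon_mul_mon]; norm_num

lemma xx4_mon (r : ℚ) : xx ^ 4 * monomial (E 0 0) r = monomial (E 4 0) r := by
  rw [xx_pow_eq, mon_mul_mon]; norm_num

lemma xx_mon30 (r : ℚ) : xx * monomial (E 3 0) r = monomial (E 4 0) r := by
  rw [show xx = xx ^ 1 from (pow_one xx).symm, xx_pow_eq, mon_mul_mon]; norm_num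

lemma xx_mon11 (r : ℚ) : xx * monomial (E 1 1) r = monomial (E 2 1) r := by
  rw [show xx = xx ^ 1 from (pow_one xx).symm, xx_pow_eq, mon_mul_mon]; norm_num

lemma hg1 : g1 ∈ II := Ideal.subset_span (Set.mem_insert _ _)
lemma hg2 : g2 ∈ II := Ideal.subset_span (Set.mem_insert_of_mem _ rfl)

lemma inj0 {c : ℚ} (h : monomial (E 4 0) c ∈ II) : c = 0 := by
  have h4 := lam4 h
  simp [coeff_monomial, E_eq_iff] at h4
  linarith

lemma inj1 {c : ℚ} (h : monomial (E 3 0) c ∈ II) : c = 0 := by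
  have h3 := lam3 h
  simp [coeff_monomial, E_eq_iff] at h3
  linarith

lemma sur1 (c d : ℚ) :
    xx ^ 2 * monomial (E 1 0) ((2304 * c + 127 * d) / 2304)
      - (monomial (E 3 0) c + monomial (E 1 1) d) ∈ II := by
  have key : xx ^ 2 * monomial (E 1 0) ((2304 * c + 127 * d) / 2304)
      - (monomial (E 3 0) c + monomial (E 1 1) d) = C (d / 2304) * g1 := by
    have hs : (2304 * c + 127 * d) / 2304 = c + 127 * d / 2304 := by ring
    rw [xx2_mon, hs, map_add, g1_eq, mul_sub, C_mul_monomial, C_mul_monomial,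
      show (d / 2304 * (2304 : ℚ)) = d from by ring,
      show (d / 2304 * (127 : ℚ)) = 127 * d / 2304 from by ring]
    abel
  rw [key]
  exact Ideal.mul_mem_left _ _ hg1

lemma sur0 (c d e : ℚ) :
    xx ^ 4 * monomial (E 0 0) ((36864 * c + 2032 * d + 113 * e) / 36864)
      - (monomial (E 4 0) c + monomial (E 2 1) d + monomial (E 0 2) e) ∈ II := by
  have key : xx ^ 4 * monomial (E 0 0) ((36864 * c + 2032 * d + 113 * e) / 36864)
      - (monomial (E 4 0) c + monomial (E 2 1) d + monomial (E 0 2) e)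
      = C (d / 2304) * (xx * g1) + C (e / 36864) * g2 := by
    have hs : (36864 * c + 2032 * d + 113 * e) / 36864
        = c + 127 * d / 2304 + 113 * e / 36864 := by ring
    rw [xx4_mon, hs, map_add, map_add, g1_eq, g2_eq, mul_sub xx, xx_mon30, xx_mon11,
      mul_sub, mul_sub, C_mul_monomial, C_mul_monomial, C_mul_monomial, C_mul_monomial,
      show (d / 2304 * (2304 : ℚ)) = d from by ring,
      show (d / 2304 * (127 : ℚ)) = 127 * d / 2304 from by ring,
      show (e / 36864 * (36864 : ℚ)) = e from by ring,
      show (e / 36864 * (113 : ℚ)) = 113 * e / 36864 from by ring]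
    abel
  rw [key]
  exact add_mem (Ideal.mul_mem_left _ _ (Ideal.mul_mem_left _ _ hg1))
    (Ideal.mul_mem_left _ _ hg2)

end G6

/-- Hard Lefschetz for the tautological ring
`A = ℚ[x,y]/(127x³−2304xy, 113x⁴−36864y²)` (`deg x = 1`, `deg y = 2`):
multiplication by `x^{4−2i}` gives an isomorphism `A_i → A_{4−i}` for `i = 0, 1, 2`;
in particular `x⁴ ≠ 0` in `A`. -/
theorem genus_six_tautological_ring_hard_lefschetz :
    let S := MvPolynomial (Fin 2) ℚ
    let x : S := X 0
    let y : S := X 1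
    let I : Ideal S := Ideal.span {127 * x ^ 3 - 2304 * x * y, 113 * x ^ 4 - 36864 * y ^ 2}
    let xq : S ⧸ I := Ideal.Quotient.mk I x
    let w : Fin 2 → ℕ := ![1, 2]
    let Agr : ℕ → Submodule ℚ (S ⧸ I) := fun j =>
      Submodule.map (Ideal.Quotient.mkₐ ℚ I).toLinearMap (weightedHomogeneousSubmodule ℚ w j)
    (∀ i : ℕ, i ≤ 2 →
      (∀ a ∈ Agr i, xq ^ (4 - 2 * i) * a = 0 → a = 0) ∧
      (∀ b ∈ Agr (4 - i), ∃ a ∈ Agr i, xq ^ (4 - 2 * i) * a = b)) ∧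
    xq ^ 4 ≠ 0 := by
  intro S x y I xq w Agr
  constructor
  · intro i hi
    interval_cases i
    · -- i = 0
      constructor
      · rintro a ⟨p, hp, rfl⟩ h0
        have hp' : p.IsWeightedHomogeneous ![1, 2] 0 := hp
        have hp0 : p = monomial (G6.E 0 0) (coeff (G6.E 0 0) p) := G6.hom0 hp'
        set c := coeff (G6.E 0 0) p with hc
        have hmem : G6.xx ^ 4 * p ∈ G6.II := by
          rw [← Ideal.Quotient.eq_zero_iff_mem, map_mul, map_pow]
          exact h0
        rw [hp0, G6.xx4_mon] at hmem
        have hc0 : c = 0 := G6.inj0 hmem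
        have hpz : p = 0 := by rw [hp0, hc0, map_zero]
        show (Ideal.Quotient.mkₐ ℚ I).toLinearMap p = 0
        rw [hpz, map_zero]
      · rintro b ⟨p, hp, rfl⟩
        have hp' : p.IsWeightedHomogeneous ![1, 2] 4 := hp
        set c := coeff (G6.E 4 0) p with hc
        set d := coeff (G6.E 2 1) p with hd
        set e := coeff (G6.E 0 2) p with he
        have hp4 : p = monomial (G6.E 4 0) c + monomial (G6.E 2 1) d
            + monomial (G6.E 0 2) e := G6.hom4 hp'
        refine ⟨(Ideal.Quotient.mkₐ ℚ I).toLinearMap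
            (monomial (G6.E 0 0) ((36864 * c + 2032 * d + 113 * e) / 36864)),
          ⟨_, ?_, rfl⟩, ?_⟩
        · exact isWeightedHomogeneous_monomial _ _ _ (by rw [G6.weight_E])
        · show Ideal.Quotient.mk I x ^ 4
              * Ideal.Quotient.mk I
                  (monomial (G6.E 0 0) ((36864 * c + 2032 * d + 113 * e) / 36864))
            = Ideal.Quotient.mk I p
          rw [← map_pow, ← map_mul, Ideal.Quotient.mk_eq_mk_iff_sub_mem, hp4]
          exact G6.sur0 c d e
    · -- i = 1
      constructor
      · rintro a ⟨p, hp, rfl⟩ h0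
        have hp' : p.IsWeightedHomogeneous ![1, 2] 1 := hp
        have hp1 : p = monomial (G6.E 1 0) (coeff (G6.E 1 0) p) := G6.hom1 hp'
        set c := coeff (G6.E 1 0) p with hc
        have hmem : G6.xx ^ 2 * p ∈ G6.II := by
          rw [← Ideal.Quotient.eq_zero_iff_mem, map_mul, map_pow]
          exact h0
        rw [hp1, G6.xx2_mon] at hmem
        have hc0 : c = 0 := G6.inj1 hmem
        have hpz : p = 0 := by rw [hp1, hc0, map_zero]
        show (Ideal.Quotient.mkₐ ℚ I).toLinearMap p = 0
        rw [hpz, map_zero]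
      · rintro b ⟨p, hp, rfl⟩
        have hp' : p.IsWeightedHomogeneous ![1, 2] 3 := hp
        set c := coeff (G6.E 3 0) p with hc
        set d := coeff (G6.E 1 1) p with hd
        have hp3 : p = monomial (G6.E 3 0) c + monomial (G6.E 1 1) d := G6.hom3 hp'
        refine ⟨(Ideal.Quotient.mkₐ ℚ I).toLinearMap
            (monomial (G6.E 1 0) ((2304 * c + 127 * d) / 2304)),
          ⟨_, ?_, rfl⟩, ?_⟩
        · exact isWeightedHomogeneous_monomial _ _ _ (by rw [G6.weight_E])
        · show Ideal.Quotient.mk I x ^ 2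
              * Ideal.Quotient.mk I
                  (monomial (G6.E 1 0) ((2304 * c + 127 * d) / 2304))
            = Ideal.Quotient.mk I p
          rw [← map_pow, ← map_mul, Ideal.Quotient.mk_eq_mk_iff_sub_mem, hp3]
          exact G6.sur1 c d
    · -- i = 2
      constructor
      · intro a _ h0
        simpa using h0
      · intro b hb
        exact ⟨b, hb, by simp⟩
  · intro h
    have hmem : G6.xx ^ 4 ∈ G6.II := by
      rw [← Ideal.Quotient.eq_zero_iff_mem, map_pow]
      exact h
    rw [G6.xx_pow_eq] at hmem
    exact one_ne_zero (G6.inj0 hmem)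
end

section
/- In the graded polynomial ring ℚ[x, y, z] with deg x = 1, deg y = 2, deg z = 3, the element 42019x^6 − 1234800x^4y lies in the ideal generated by the five elements: 5195x^4 + 3644694xz + 749412y^2 − 265788x^2y; 33859814400yz − 95311440x^3y + 2288539x^5; 19151377x^5 + 16929907200xy^2 − 1142345520x^3y; 1422489600z^2 − 983x^6; and 1185408000y^3 − 47543x^6. -/
open MvPolynomial

/-- In `ℚ[x,y,z]` (`x = κ₁`, `y = κ₂`, `z = κ₃`), the sixth generator
`42019x⁶ − 1234800x⁴y` of Faber's ideal of relations for `R^*(M_9)` lies in the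
ideal generated by the other five. -/
theorem genus_nine_sixth_relation_superfluous :
    let S := MvPolynomial (Fin 3) ℚ
    let x : S := X 0
    let y : S := X 1
    let z : S := X 2
    (42019 * x ^ 6 - 1234800 * x ^ 4 * y) ∈ Ideal.span
      ({5195 * x ^ 4 + 3644694 * x * z + 749412 * y ^ 2 - 265788 * x ^ 2 * y,
        33859814400 * y * z - 95311440 * x ^ 3 * y + 2288539 * x ^ 5,
        19151377 * x ^ 5 + 16929907200 * x * y ^ 2 - 1142345520 * x ^ 3 * y,
        1422489600 * z ^ 2 - 983 * x ^ 6,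
        1185408000 * y ^ 3 - 47543 * x ^ 6} : Set S) := by
  intro S x y z
  set g1 : S := 5195 * x ^ 4 + 3644694 * x * z + 749412 * y ^ 2 - 265788 * x ^ 2 * y with hg1
  set g2 : S := 33859814400 * y * z - 95311440 * x ^ 3 * y + 2288539 * x ^ 5 with hg2
  set g3 : S := 19151377 * x ^ 5 + 16929907200 * x * y ^ 2 - 1142345520 * x ^ 3 * y with hg3
  set g4 : S := 1422489600 * z ^ 2 - 983 * x ^ 6 with hg4
  set g5 : S := 1185408000 * y ^ 3 - 47543 * x ^ 6 with hg5
  have hc : (C ((6478448521 : ℚ)⁻¹) : S) * 6478448521 = 1 := by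
    rw [show (6478448521 : S) = C (6478448521 : ℚ) from (map_ofNat C _).symm, ← C_mul]
    norm_num
  have key : (42019 * x ^ 6 - 1234800 * x ^ 4 * y : S) =
      C ((6478448521 : ℚ)⁻¹) *
        ((3226087872000 * y) * g1 + (-347258345 * x) * g2
          + (50647380 * x) * g3 + (-2039524758) * g5) := by
    have hint : ((6478448521 : S)) * (42019 * x ^ 6 - 1234800 * x ^ 4 * y) =
        (3226087872000 * y) * g1 + (-347258345 * x) * g2
          + (50647380 * x) * g3 + (-2039524758) * g5 := by
      rw [hg1, hg2, hg3, hg5]; ring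
    calc (42019 * x ^ 6 - 1234800 * x ^ 4 * y : S)
        = (C ((6478448521 : ℚ)⁻¹) * 6478448521) *
            (42019 * x ^ 6 - 1234800 * x ^ 4 * y) := by rw [hc, one_mul]
      _ = C ((6478448521 : ℚ)⁻¹) *
            ((6478448521 : S) * (42019 * x ^ 6 - 1234800 * x ^ 4 * y)) := by ring
      _ = _ := by rw [hint]
  rw [key]
  have h1 : g1 ∈ Ideal.span {g1, g2, g3, g4, g5} := Ideal.subset_span (by simp)
  have h2 : g2 ∈ Ideal.span {g1, g2, g3, g4, g5} := Ideal.subset_span (by simp)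
  have h3 : g3 ∈ Ideal.span {g1, g2, g3, g4, g5} := Ideal.subset_span (by simp)
  have h5 : g5 ∈ Ideal.span {g1, g2, g3, g4, g5} := Ideal.subset_span (by simp)
  exact Ideal.mul_mem_left _ _ (Ideal.add_mem _ (Ideal.add_mem _ (Ideal.add_mem _
    (Ideal.mul_mem_left _ _ h1) (Ideal.mul_mem_left _ _ h2))
    (Ideal.mul_mem_left _ _ h3)) (Ideal.mul_mem_left _ _ h5))
end

section
/- Let A = ℚ[x, y, z]/I where deg x = 1, deg y = 2, deg z = 3 and I is generated by 5195x^4 + 3644694xz + 749412y^2 − 265788x^2y; 33859814400yz − 95311440x^3y + 2288539x^5; 19151377x^5 + 16929907200xy^2 − 1142345520x^3y; 1422489600z^2 − 983x^6; 1185408000y^3 − 47543x^6. Then the Hilbert function of A is (dim A_0, ..., dim A_7) = (1, 1, 2, 3, 3, 2, 1, 1), A_j = 0 for j > 7, and A is Gorenstein with socle in degree 7: the pairing A_i × A_{7-i} → A_7 ≅ ℚ is perfect for all 0 ≤ i ≤ 7. -/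
open MvPolynomial

namespace GenusNine
noncomputable section
set_option maxHeartbeats 1000000

abbrev S : Type := MvPolynomial (Fin 3) ℚ
abbrev M3 (a b c : ℕ) : S := X 0 ^ a * X 1 ^ b * X 2 ^ c
abbrev W : Fin 3 → ℕ := ![1, 2, 3]

def g1 : S := 5195 * X 0 ^ 4 + 3644694 * (X 0) * (X 2) + 749412 * (X 1) ^ 2 - 265788 * (X 0) ^ 2 * (X 1)
def g2 : S := 33859814400 * (X 1) * (X 2) - 95311440 * (X 0) ^ 3 * (X 1) + 2288539 * (X 0) ^ 5
def g3 : S := 19151377 * (X 0) ^ 5 + 16929907200 * (X 0) * (X 1) ^ 2 - 1142345520 * (X 0) ^ 3 * (X 1)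
def g4 : S := 1422489600 * (X 2) ^ 2 - 983 * (X 0) ^ 6
def g5 : S := 1185408000 * (X 1) ^ 3 - 47543 * (X 0) ^ 6
def Ig : Ideal S := Ideal.span ({g1, g2, g3, g4, g5} : Set S)

lemma comb_mem (a1 a2 a3 a4 a5 : S) : a1 * g1 + a2 * g2 + a3 * g3 + a4 * g4 + a5 * g5 ∈ Ig := by
  refine add_mem (add_mem (add_mem (add_mem ?_ ?_) ?_) ?_) ?_ <;>
    exact Ideal.mul_mem_left _ _ (Ideal.subset_span (by simp))

lemma mem_of_C_mul_mem (d : ℚ) (hd : d ≠ 0) (v : S) (h : C d * v ∈ Ig) : v ∈ Ig := by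
  have e : v = C d⁻¹ * (C d * v) := by
    rw [← mul_assoc, ← C_mul, inv_mul_cancel₀ hd, C_1, one_mul]
  rw [e]; exact Ideal.mul_mem_left _ _ h

lemma ofNat_eq_C (n : ℕ) [n.AtLeastTwo] : (OfNat.ofNat n : S) = C (OfNat.ofNat n : ℚ) :=
  (map_ofNat C _).symm

def gam : ℕ → ℕ → ℕ → ℚ := fun a b c =>
  if a = 7 ∧ b = 0 ∧ c = 0 then 14224896000 else
  if a = 5 ∧ b = 1 ∧ c = 0 then 484058880 else
  if a = 3 ∧ b = 2 ∧ c = 0 then 16570448 else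
  if a = 1 ∧ b = 3 ∧ c = 0 then 570516 else
  if a = 4 ∧ b = 0 ∧ c = 1 then 11617056 else
  if a = 2 ∧ b = 1 ∧ c = 1 then 401128 else
  if a = 0 ∧ b = 2 ∧ c = 1 then 13927 else
  if a = 1 ∧ b = 0 ∧ c = 2 then 9830 else 0

lemma gam_ne_seven {a b c n : ℕ} (h : a + 2*b + 3*c = n) (hn : n ≠ 7) : gam a b c = 0 := by
  unfold gam
  split_ifs with h1 h2 h3 h4 h5 h6 h7 h8
  · omega
  · omega
  · omega
  · omega
  · omega
  · omega
  · omega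
  · omega
  · rfl

def cf : (Fin 3 →₀ ℕ) → ℚ := fun u => gam (u 0) (u 1) (u 2)

def L : S →ₗ[ℚ] ℚ := (Finsupp.lsum ℚ (fun u => cf u • (LinearMap.id : ℚ →ₗ[ℚ] ℚ))).comp
  (AddMonoidAlgebra.coeffLinearEquiv (R := ℚ) (S := ℚ) (M := Fin 3 →₀ ℕ)).toLinearMap

lemma L_monomial (u : Fin 3 →₀ ℕ) (r : ℚ) : L (monomial u r) = cf u * r := by
  show (Finsupp.lsum ℚ (fun u => cf u • (LinearMap.id : ℚ →ₗ[ℚ] ℚ))) (Finsupp.single u r) = cf u * r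
  simp

lemma usplit (u : Fin 3 →₀ ℕ) :
    u = Finsupp.single 0 (u 0) + Finsupp.single 1 (u 1) + Finsupp.single 2 (u 2) := by
  ext i; fin_cases i <;> simp

lemma mono_eq (u : Fin 3 →₀ ℕ) (r : ℚ) : (monomial u r : S) = C r * M3 (u 0) (u 1) (u 2) := by
  conv_lhs => rw [usplit u]
  rw [monomial_add_single, monomial_add_single]
  have h : (monomial (Finsupp.single (0:Fin 3) (u 0)) r : S) = C r * X 0 ^ (u 0) := by
    rw [X_pow_eq_monomial, C_mul_monomial, mul_one]
  rw [h]; ring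

lemma wt_eq (u : Fin 3 →₀ ℕ) : Finsupp.weight W u = u 0 + 2 * u 1 + 3 * u 2 := by
  conv_lhs => rw [usplit u]
  simp only [map_add]
  simp [Finsupp.weight_apply, Finsupp.sum_single_index]
  ring

lemma sval (a b c : ℕ) :
    ((Finsupp.single (0:Fin 3) a + Finsupp.single 1 b + Finsupp.single 2 c : Fin 3 →₀ ℕ)) 0 = a ∧
    ((Finsupp.single (0:Fin 3) a + Finsupp.single 1 b + Finsupp.single 2 c : Fin 3 →₀ ℕ)) 1 = b ∧
    ((Finsupp.single (0:Fin 3) a + Finsupp.single 1 b + Finsupp.single 2 c : Fin 3 →₀ ℕ)) 2 = c := by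
  refine ⟨?_, ?_, ?_⟩ <;> simp [Finsupp.single_apply]

lemma M3C (r : ℚ) (a b c : ℕ) :
    C r * M3 a b c = monomial (Finsupp.single 0 a + Finsupp.single 1 b + Finsupp.single 2 c) r := by
  rw [mono_eq _ r, (sval a b c).1, (sval a b c).2.1, (sval a b c).2.2]

lemma L_CM3 (r : ℚ) (a b c : ℕ) : L (C r * M3 a b c) = r * gam a b c := by
  rw [M3C, L_monomial]
  unfold cf
  rw [(sval a b c).1, (sval a b c).2.1, (sval a b c).2.2, mul_comm]

lemma L_M3 (a b c : ℕ) : L (M3 a b c) = gam a b c := by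
  have h := L_CM3 1 a b c; rwa [C_1, one_mul, one_mul] at h

lemma L_C_mul (r : ℚ) (p : S) : L (C r * p) = r * L p := by
  rw [← MvPolynomial.smul_eq_C_mul, map_smul]; rfl

lemma L_ofNat_mul (n : ℕ) [n.AtLeastTwo] (p : S) :
    L ((OfNat.ofNat n : S) * p) = (OfNat.ofNat n : ℚ) * L p := by
  rw [ofNat_eq_C, L_C_mul]

lemma hom_MON {n : ℕ} (r : ℚ) (a b c : ℕ) (h : a + 2*b + 3*c = n) :
    IsWeightedHomogeneous W (C r * M3 a b c : S) n := by
  rw [M3C]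
  apply isWeightedHomogeneous_monomial
  rw [wt_eq, (sval a b c).1, (sval a b c).2.1, (sval a b c).2.2, h]

lemma hom_M3 {n : ℕ} (a b c : ℕ) (h : a + 2*b + 3*c = n) :
    IsWeightedHomogeneous W (M3 a b c : S) n := by
  have h2 := hom_MON 1 a b c h
  rwa [C_1, one_mul] at h2

lemma L_hom_ne {p : S} {n : ℕ} (hp : IsWeightedHomogeneous W p n) (hn : n ≠ 7) : L p = 0 := by
  conv_lhs => rw [← support_sum_monomial_coeff p]
  rw [map_sum]
  refine Finset.sum_eq_zero fun u hu => ?_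
  rw [L_monomial]
  have h1 := hp (mem_support_iff.mp hu)
  rw [wt_eq] at h1
  rw [show cf u = 0 from gam_ne_seven h1 hn, zero_mul]


lemma hg1 : IsWeightedHomogeneous W g1 4 := by
  rw [← mem_weightedHomogeneousSubmodule]
  have e : g1 = C (5195:ℚ) * M3 4 0 0 + C (3644694:ℚ) * M3 1 0 1 + C (749412:ℚ) * M3 0 2 0 - C (265788:ℚ) * M3 2 1 0 := by
    unfold g1 M3; simp only [ofNat_eq_C]; ring
  rw [e]
  refine sub_mem (add_mem (add_mem (?_) ?_) ?_) ?_ <;> exact hom_MON _ _ _ _ (by norm_num)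

lemma hg2 : IsWeightedHomogeneous W g2 5 := by
  rw [← mem_weightedHomogeneousSubmodule]
  have e : g2 = C (33859814400:ℚ) * M3 0 1 1 + C (2288539:ℚ) * M3 5 0 0 - C (95311440:ℚ) * M3 3 1 0 := by
    unfold g2 M3; simp only [ofNat_eq_C]; ring
  rw [e]
  refine sub_mem (add_mem (?_) ?_) ?_ <;> exact hom_MON _ _ _ _ (by norm_num)

lemma hg3 : IsWeightedHomogeneous W g3 5 := by
  rw [← mem_weightedHomogeneousSubmodule]
  have e : g3 = C (19151377:ℚ) * M3 5 0 0 + C (16929907200:ℚ) * M3 1 2 0 - C (1142345520:ℚ) * M3 3 1 0 := by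
    unfold g3 M3; simp only [ofNat_eq_C]; ring
  rw [e]
  refine sub_mem (add_mem (?_) ?_) ?_ <;> exact hom_MON _ _ _ _ (by norm_num)

lemma hg4 : IsWeightedHomogeneous W g4 6 := by
  rw [← mem_weightedHomogeneousSubmodule]
  have e : g4 = C (1422489600:ℚ) * M3 0 0 2 - C (983:ℚ) * M3 6 0 0 := by
    unfold g4 M3; simp only [ofNat_eq_C]; ring
  rw [e]
  refine sub_mem (?_) ?_ <;> exact hom_MON _ _ _ _ (by norm_num)

lemma hg5 : IsWeightedHomogeneous W g5 6 := by
  rw [← mem_weightedHomogeneousSubmodule]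
  have e : g5 = C (1185408000:ℚ) * M3 0 3 0 - C (47543:ℚ) * M3 6 0 0 := by
    unfold g5 M3; simp only [ofNat_eq_C]; ring
  rw [e]
  refine sub_mem (?_) ?_ <;> exact hom_MON _ _ _ _ (by norm_num)

lemma Lchk_g1_300 : L (M3 3 0 0 * g1) = 0 := by
  have e : M3 3 0 0 * g1 = C (5195:ℚ) * M3 7 0 0 + C (3644694:ℚ) * M3 4 0 1 + C (749412:ℚ) * M3 3 2 0 - C (265788:ℚ) * M3 5 1 0 := by
    unfold g1 M3; simp only [ofNat_eq_C]; ring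
  rw [e]
  simp only [map_add, map_sub, L_CM3]
  norm_num [gam]

lemma Lchk_g1_110 : L (M3 1 1 0 * g1) = 0 := by
  have e : M3 1 1 0 * g1 = C (5195:ℚ) * M3 5 1 0 + C (3644694:ℚ) * M3 2 1 1 + C (749412:ℚ) * M3 1 3 0 - C (265788:ℚ) * M3 3 2 0 := by
    unfold g1 M3; simp only [ofNat_eq_C]; ring
  rw [e]
  simp only [map_add, map_sub, L_CM3]
  norm_num [gam]

lemma Lchk_g1_001 : L (M3 0 0 1 * g1) = 0 := by
  have e : M3 0 0 1 * g1 = C (5195:ℚ) * M3 4 0 1 + C (3644694:ℚ) * M3 1 0 2 + C (749412:ℚ) * M3 0 2 1 - C (265788:ℚ) * M3 2 1 1 := by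
    unfold g1 M3; simp only [ofNat_eq_C]; ring
  rw [e]
  simp only [map_add, map_sub, L_CM3]
  norm_num [gam]

lemma Lchk_g2_200 : L (M3 2 0 0 * g2) = 0 := by
  have e : M3 2 0 0 * g2 = C (33859814400:ℚ) * M3 2 1 1 + C (2288539:ℚ) * M3 7 0 0 - C (95311440:ℚ) * M3 5 1 0 := by
    unfold g2 M3; simp only [ofNat_eq_C]; ring
  rw [e]
  simp only [map_add, map_sub, L_CM3]
  norm_num [gam]

lemma Lchk_g2_010 : L (M3 0 1 0 * g2) = 0 := by
  have e : M3 0 1 0 * g2 = C (33859814400:ℚ) * M3 0 2 1 + C (2288539:ℚ) * M3 5 1 0 - C (95311440:ℚ) * M3 3 2 0 := by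
    unfold g2 M3; simp only [ofNat_eq_C]; ring
  rw [e]
  simp only [map_add, map_sub, L_CM3]
  norm_num [gam]

lemma Lchk_g3_200 : L (M3 2 0 0 * g3) = 0 := by
  have e : M3 2 0 0 * g3 = C (19151377:ℚ) * M3 7 0 0 + C (16929907200:ℚ) * M3 3 2 0 - C (1142345520:ℚ) * M3 5 1 0 := by
    unfold g3 M3; simp only [ofNat_eq_C]; ring
  rw [e]
  simp only [map_add, map_sub, L_CM3]
  norm_num [gam]

lemma Lchk_g3_010 : L (M3 0 1 0 * g3) = 0 := by
  have e : M3 0 1 0 * g3 = C (19151377:ℚ) * M3 5 1 0 + C (16929907200:ℚ) * M3 1 3 0 - C (1142345520:ℚ) * M3 3 2 0 := by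
    unfold g3 M3; simp only [ofNat_eq_C]; ring
  rw [e]
  simp only [map_add, map_sub, L_CM3]
  norm_num [gam]

lemma Lchk_g4_100 : L (M3 1 0 0 * g4) = 0 := by
  have e : M3 1 0 0 * g4 = C (1422489600:ℚ) * M3 1 0 2 - C (983:ℚ) * M3 7 0 0 := by
    unfold g4 M3; simp only [ofNat_eq_C]; ring
  rw [e]
  simp only [map_add, map_sub, L_CM3]
  norm_num [gam]

lemma Lchk_g5_100 : L (M3 1 0 0 * g5) = 0 := by
  have e : M3 1 0 0 * g5 = C (1185408000:ℚ) * M3 1 3 0 - C (47543:ℚ) * M3 7 0 0 := by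
    unfold g5 M3; simp only [ofNat_eq_C]; ring
  rw [e]
  simp only [map_add, map_sub, L_CM3]
  norm_num [gam]

lemma Lkill_g1 : ∀ q : S, L (q * g1) = 0 := by
  intro q
  induction q using MvPolynomial.induction_on' with
  | add p q hp hq => rw [add_mul, map_add, hp, hq, add_zero]
  | monomial u r =>
    rw [mono_eq u r]
    by_cases h : (u 0) + 2*(u 1) + 3*(u 2) = 3
    · obtain ⟨h0, h1', h2'⟩ | ⟨h0, h1', h2'⟩ | ⟨h0, h1', h2'⟩ : (u 0 = 3 ∧ u 1 = 0 ∧ u 2 = 0) ∨ (u 0 = 1 ∧ u 1 = 1 ∧ u 2 = 0) ∨ (u 0 = 0 ∧ u 1 = 0 ∧ u 2 = 1) := by omega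
      all_goals rw [h0, h1', h2', mul_assoc, L_C_mul]
      · rw [Lchk_g1_300, mul_zero]
      · rw [Lchk_g1_110, mul_zero]
      · rw [Lchk_g1_001, mul_zero]
    · exact L_hom_ne ((hom_MON r _ _ _ rfl).mul hg1) (by omega)

lemma Lkill_g2 : ∀ q : S, L (q * g2) = 0 := by
  intro q
  induction q using MvPolynomial.induction_on' with
  | add p q hp hq => rw [add_mul, map_add, hp, hq, add_zero]
  | monomial u r =>
    rw [mono_eq u r]
    by_cases h : (u 0) + 2*(u 1) + 3*(u 2) = 2
    · obtain ⟨h0, h1', h2'⟩ | ⟨h0, h1', h2'⟩ : (u 0 = 2 ∧ u 1 = 0 ∧ u 2 = 0) ∨ (u 0 = 0 ∧ u 1 = 1 ∧ u 2 = 0) := by omega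
      all_goals rw [h0, h1', h2', mul_assoc, L_C_mul]
      · rw [Lchk_g2_200, mul_zero]
      · rw [Lchk_g2_010, mul_zero]
    · exact L_hom_ne ((hom_MON r _ _ _ rfl).mul hg2) (by omega)

lemma Lkill_g3 : ∀ q : S, L (q * g3) = 0 := by
  intro q
  induction q using MvPolynomial.induction_on' with
  | add p q hp hq => rw [add_mul, map_add, hp, hq, add_zero]
  | monomial u r =>
    rw [mono_eq u r]
    by_cases h : (u 0) + 2*(u 1) + 3*(u 2) = 2
    · obtain ⟨h0, h1', h2'⟩ | ⟨h0, h1', h2'⟩ : (u 0 = 2 ∧ u 1 = 0 ∧ u 2 = 0) ∨ (u 0 = 0 ∧ u 1 = 1 ∧ u 2 = 0) := by omega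
      all_goals rw [h0, h1', h2', mul_assoc, L_C_mul]
      · rw [Lchk_g3_200, mul_zero]
      · rw [Lchk_g3_010, mul_zero]
    · exact L_hom_ne ((hom_MON r _ _ _ rfl).mul hg3) (by omega)

lemma Lkill_g4 : ∀ q : S, L (q * g4) = 0 := by
  intro q
  induction q using MvPolynomial.induction_on' with
  | add p q hp hq => rw [add_mul, map_add, hp, hq, add_zero]
  | monomial u r =>
    rw [mono_eq u r]
    by_cases h : (u 0) + 2*(u 1) + 3*(u 2) = 1
    · obtain ⟨h0, h1', h2'⟩ : (u 0 = 1 ∧ u 1 = 0 ∧ u 2 = 0) := by omega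
      all_goals rw [h0, h1', h2', mul_assoc, L_C_mul]
      · rw [Lchk_g4_100, mul_zero]
    · exact L_hom_ne ((hom_MON r _ _ _ rfl).mul hg4) (by omega)

lemma Lkill_g5 : ∀ q : S, L (q * g5) = 0 := by
  intro q
  induction q using MvPolynomial.induction_on' with
  | add p q hp hq => rw [add_mul, map_add, hp, hq, add_zero]
  | monomial u r =>
    rw [mono_eq u r]
    by_cases h : (u 0) + 2*(u 1) + 3*(u 2) = 1
    · obtain ⟨h0, h1', h2'⟩ : (u 0 = 1 ∧ u 1 = 0 ∧ u 2 = 0) := by omega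
      all_goals rw [h0, h1', h2', mul_assoc, L_C_mul]
      · rw [Lchk_g5_100, mul_zero]
    · exact L_hom_ne ((hom_MON r _ _ _ rfl).mul hg5) (by omega)

def Jideal : Ideal S where
  carrier := {p | ∀ q : S, L (q * p) = 0}
  add_mem' := fun ha hb q => by rw [mul_add, map_add, ha q, hb q, add_zero]
  zero_mem' := fun q => by rw [mul_zero, map_zero]
  smul_mem' := fun r p hp q => by
    rw [smul_eq_mul, ← mul_assoc, hp (q * r)]

lemma L_vanish {p : S} (hp : p ∈ Ig) : L p = 0 := by
  have hsub : Ig ≤ Jideal := by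
    rw [Ig, Ideal.span_le]
    intro q hq
    simp only [Set.mem_insert_iff, Set.mem_singleton_iff] at hq
    rcases hq with rfl|rfl|rfl|rfl|rfl
    · exact fun q => Lkill_g1 q
    · exact fun q => Lkill_g2 q
    · exact fun q => Lkill_g3 q
    · exact fun q => Lkill_g4 q
    · exact fun q => Lkill_g5 q
  have h := hsub hp 1
  rwa [one_mul] at h

lemma red0 : ∀ a b c : ℕ, a + 2*b + 3*c = 0 → ∃ c1 : ℚ,
    M3 a b c - (C c1 * M3 0 0 0) ∈ Ig := by
  intro a b c h
  obtain ⟨rfl, rfl, rfl⟩ : (a = 0 ∧ b = 0 ∧ c = 0) := by omega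
  · refine ⟨1, ?_⟩
    have e : M3 0 0 0 - (C (1:ℚ) * M3 0 0 0) = 0 := by
      simp
    rw [e]; exact zero_mem _
lemma red1 : ∀ a b c : ℕ, a + 2*b + 3*c = 1 → ∃ c1 : ℚ,
    M3 a b c - (C c1 * M3 1 0 0) ∈ Ig := by
  intro a b c h
  obtain ⟨rfl, rfl, rfl⟩ : (a = 1 ∧ b = 0 ∧ c = 0) := by omega
  · refine ⟨1, ?_⟩
    have e : M3 1 0 0 - (C (1:ℚ) * M3 1 0 0) = 0 := by
      simp
    rw [e]; exact zero_mem _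
lemma red2 : ∀ a b c : ℕ, a + 2*b + 3*c = 2 → ∃ c1 c2 : ℚ,
    M3 a b c - (C c1 * M3 2 0 0 + C c2 * M3 0 1 0) ∈ Ig := by
  intro a b c h
  obtain ⟨rfl, rfl, rfl⟩ | ⟨rfl, rfl, rfl⟩ : (a = 2 ∧ b = 0 ∧ c = 0) ∨ (a = 0 ∧ b = 1 ∧ c = 0) := by omega
  · refine ⟨1, 0, ?_⟩
    have e : M3 2 0 0 - (C (1:ℚ) * M3 2 0 0 + C (0:ℚ) * M3 0 1 0) = 0 := by
      simp
    rw [e]; exact zero_mem _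
  · refine ⟨0, 1, ?_⟩
    have e : M3 0 1 0 - (C (0:ℚ) * M3 2 0 0 + C (1:ℚ) * M3 0 1 0) = 0 := by
      simp
    rw [e]; exact zero_mem _
lemma red3 : ∀ a b c : ℕ, a + 2*b + 3*c = 3 → ∃ c1 c2 c3 : ℚ,
    M3 a b c - (C c1 * M3 3 0 0 + C c2 * M3 1 1 0 + C c3 * M3 0 0 1) ∈ Ig := by
  intro a b c h
  obtain ⟨rfl, rfl, rfl⟩ | ⟨rfl, rfl, rfl⟩ | ⟨rfl, rfl, rfl⟩ : (a = 3 ∧ b = 0 ∧ c = 0) ∨ (a = 1 ∧ b = 1 ∧ c = 0) ∨ (a = 0 ∧ b = 0 ∧ c = 1) := by omega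
  · refine ⟨1, 0, 0, ?_⟩
    have e : M3 3 0 0 - (C (1:ℚ) * M3 3 0 0 + C (0:ℚ) * M3 1 1 0 + C (0:ℚ) * M3 0 0 1) = 0 := by
      simp
    rw [e]; exact zero_mem _
  · refine ⟨0, 1, 0, ?_⟩
    have e : M3 1 1 0 - (C (0:ℚ) * M3 3 0 0 + C (1:ℚ) * M3 1 1 0 + C (0:ℚ) * M3 0 0 1) = 0 := by
      simp
    rw [e]; exact zero_mem _
  · refine ⟨0, 0, 1, ?_⟩
    have e : M3 0 0 1 - (C (0:ℚ) * M3 3 0 0 + C (0:ℚ) * M3 1 1 0 + C (1:ℚ) * M3 0 0 1) = 0 := by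
      simp
    rw [e]; exact zero_mem _
lemma red4 : ∀ a b c : ℕ, a + 2*b + 3*c = 4 → ∃ c1 c2 c3 : ℚ,
    M3 a b c - (C c1 * M3 2 1 0 + C c2 * M3 0 2 0 + C c3 * M3 1 0 1) ∈ Ig := by
  intro a b c h
  obtain ⟨rfl, rfl, rfl⟩ | ⟨rfl, rfl, rfl⟩ | ⟨rfl, rfl, rfl⟩ | ⟨rfl, rfl, rfl⟩ : (a = 4 ∧ b = 0 ∧ c = 0) ∨ (a = 2 ∧ b = 1 ∧ c = 0) ∨ (a = 0 ∧ b = 2 ∧ c = 0) ∨ (a = 1 ∧ b = 0 ∧ c = 1) := by omega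
  · refine ⟨(265788/5195 : ℚ), (-749412/5195 : ℚ), (-3644694/5195 : ℚ), ?_⟩
    apply mem_of_C_mul_mem (5195 : ℚ) (by norm_num)
    have e : C (5195:ℚ) * (M3 4 0 0 - (C (265788/5195 : ℚ) * M3 2 1 0 + C (-749412/5195 : ℚ) * M3 0 2 0 + C (-3644694/5195 : ℚ) * M3 1 0 1)) = (M3 0 0 0) * g1 + 0 * g2 + 0 * g3 + 0 * g4 + 0 * g5 := by
      simp only [mul_sub, mul_add, ← mul_assoc, ← C_mul]
      norm_num [g1, g2, g3, g4, g5, M3, map_ofNat]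
      try ring
    rw [e]; exact comb_mem _ _ _ _ _
  · refine ⟨1, 0, 0, ?_⟩
    have e : M3 2 1 0 - (C (1:ℚ) * M3 2 1 0 + C (0:ℚ) * M3 0 2 0 + C (0:ℚ) * M3 1 0 1) = 0 := by
      simp
    rw [e]; exact zero_mem _
  · refine ⟨0, 1, 0, ?_⟩
    have e : M3 0 2 0 - (C (0:ℚ) * M3 2 1 0 + C (1:ℚ) * M3 0 2 0 + C (0:ℚ) * M3 1 0 1) = 0 := by
      simp
    rw [e]; exact zero_mem _
  · refine ⟨0, 0, 1, ?_⟩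
    have e : M3 1 0 1 - (C (0:ℚ) * M3 2 1 0 + C (0:ℚ) * M3 0 2 0 + C (1:ℚ) * M3 1 0 1) = 0 := by
      simp
    rw [e]; exact zero_mem _
lemma red5 : ∀ a b c : ℕ, a + 2*b + 3*c = 5 → ∃ c1 c2 : ℚ,
    M3 a b c - (C c1 * M3 2 0 1 + C c2 * M3 0 1 1) ∈ Ig := by
  intro a b c h
  obtain ⟨rfl, rfl, rfl⟩ | ⟨rfl, rfl, rfl⟩ | ⟨rfl, rfl, rfl⟩ | ⟨rfl, rfl, rfl⟩ | ⟨rfl, rfl, rfl⟩ : (a = 5 ∧ b = 0 ∧ c = 0) ∨ (a = 3 ∧ b = 1 ∧ c = 0) ∨ (a = 1 ∧ b = 2 ∧ c = 0) ∨ (a = 2 ∧ b = 0 ∧ c = 1) ∨ (a = 0 ∧ b = 1 ∧ c = 1) := by omega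
  · refine ⟨(381245760/85823 : ℚ), (-7997771520/85823 : ℚ), ?_⟩
    apply mem_of_C_mul_mem (1891736259689740 : ℚ) (by norm_num)
    have e : C (1891736259689740:ℚ) * (M3 5 0 0 - (C (381245760/85823 : ℚ) * M3 2 0 1 + C (-7997771520/85823 : ℚ) * M3 0 1 1)) = (- 2305689635200 * M3 1 0 0) * g1 + (5206445379 * M3 0 0 0) * g2 + (102062667 * M3 0 0 0) * g3 + 0 * g4 + 0 * g5 := by
      simp only [mul_sub, mul_add, ← mul_assoc, ← C_mul]
      norm_num [g1, g2, g3, g4, g5, M3, map_ofNat]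
      try ring
    rw [e]; exact comb_mem _ _ _ _ _
  · refine ⟨(9154156/85823 : ℚ), (-161546832/85823 : ℚ), ?_⟩
    apply mem_of_C_mul_mem (1362050106976612800 : ℚ) (by norm_num)
    have e : C (1362050106976612800:ℚ) * (M3 3 1 0 - (C (9154156/85823 : ℚ) * M3 2 0 1 + C (-161546832/85823 : ℚ) * M3 0 1 1)) = (- 39860856886400 * M3 1 0 0) * g1 + (75718720333 * M3 0 0 0) * g2 + (1764463569 * M3 0 0 0) * g3 + 0 * g4 + 0 * g5 := by
      simp only [mul_sub, mul_add, ← mul_assoc, ← C_mul]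
      norm_num [g1, g2, g3, g4, g5, M3, map_ofNat]
      try ring
    rw [e]; exact comb_mem _ _ _ _ _
  · refine ⟨(372811/171646 : ℚ), (-1853168/85823 : ℚ), ?_⟩
    apply mem_of_C_mul_mem (36775352888368545600 : ℚ) (by norm_num)
    have e : C (36775352888368545600:ℚ) * (M3 1 2 0 - (C (372811/171646 : ℚ) * M3 2 0 1 + C (-1853168/85823 : ℚ) * M3 0 1 1)) = (- 21915470948400 * M3 1 0 0) * g1 + (23452188509 * M3 0 0 0) * g2 + (3142313137 * M3 0 0 0) * g3 + 0 * g4 + 0 * g5 := by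
      simp only [mul_sub, mul_add, ← mul_assoc, ← C_mul]
      norm_num [g1, g2, g3, g4, g5, M3, map_ofNat]
      try ring
    rw [e]; exact comb_mem _ _ _ _ _
  · refine ⟨1, 0, ?_⟩
    have e : M3 2 0 1 - (C (1:ℚ) * M3 2 0 1 + C (0:ℚ) * M3 0 1 1) = 0 := by
      simp
    rw [e]; exact zero_mem _
  · refine ⟨0, 1, ?_⟩
    have e : M3 0 1 1 - (C (0:ℚ) * M3 2 0 1 + C (1:ℚ) * M3 0 1 1) = 0 := by
      simp
    rw [e]; exact zero_mem _
lemma red6 : ∀ a b c : ℕ, a + 2*b + 3*c = 6 → ∃ c1 : ℚ,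
    M3 a b c - (C c1 * M3 0 0 2) ∈ Ig := by
  intro a b c h
  obtain ⟨rfl, rfl, rfl⟩ | ⟨rfl, rfl, rfl⟩ | ⟨rfl, rfl, rfl⟩ | ⟨rfl, rfl, rfl⟩ | ⟨rfl, rfl, rfl⟩ | ⟨rfl, rfl, rfl⟩ | ⟨rfl, rfl, rfl⟩ : (a = 6 ∧ b = 0 ∧ c = 0) ∨ (a = 4 ∧ b = 1 ∧ c = 0) ∨ (a = 2 ∧ b = 2 ∧ c = 0) ∨ (a = 0 ∧ b = 3 ∧ c = 0) ∨ (a = 3 ∧ b = 0 ∧ c = 1) ∨ (a = 1 ∧ b = 1 ∧ c = 1) ∨ (a = 0 ∧ b = 0 ∧ c = 2) := by omega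
  · refine ⟨(1422489600/983 : ℚ), ?_⟩
    apply mem_of_C_mul_mem (983 : ℚ) (by norm_num)
    have e : C (983:ℚ) * (M3 6 0 0 - (C (1422489600/983 : ℚ) * M3 0 0 2)) = 0 * g1 + 0 * g2 + 0 * g3 + (- M3 0 0 0) * g4 + 0 * g5 := by
      simp only [mul_sub, mul_add, ← mul_assoc, ← C_mul]
      norm_num [g1, g2, g3, g4, g5, M3, map_ofNat]
      try ring
    rw [e]; exact comb_mem _ _ _ _ _
  · refine ⟨(48405888/983 : ℚ), ?_⟩
    apply mem_of_C_mul_mem (7863595233757376400 : ℚ) (by norm_num)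
    have e : C (7863595233757376400:ℚ) * (M3 4 1 0 - (C (48405888/983 : ℚ) * M3 0 0 2)) = (- 3171244378176000 * M3 0 1 0) * g1 + (341354953135 * M3 1 0 0) * g2 + (- 49786374540 * M3 1 0 0) * g3 + (- 272217928403899 * M3 0 0 0) * g4 + (2004852837114 * M3 0 0 0) * g5 := by
      simp only [mul_sub, mul_add, ← mul_assoc, ← C_mul]
      norm_num [g1, g2, g3, g4, g5, M3, map_ofNat]
      try ring
    rw [e]; exact comb_mem _ _ _ _ _
  · refine ⟨(8285224/4915 : ℚ), ?_⟩
    apply mem_of_C_mul_mem (184902691063714846899264000 : ℚ) (by norm_num)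
    have e : C (184902691063714846899264000:ℚ) * (M3 2 2 0 - (C (8285224/4915 : ℚ) * M3 0 0 2)) = (- 5031467789214638016000 * M3 0 1 0) * g1 + (541590696449412785 * M3 1 0 0) * g2 + (- 68068953720907895 * M3 1 0 0) * g3 + (- 219116390092961258154 * M3 0 0 0) * g4 + (3180881467689538374 * M3 0 0 0) * g5 := by
      simp only [mul_sub, mul_add, ← mul_assoc, ← C_mul]
      norm_num [g1, g2, g3, g4, g5, M3, map_ofNat]
      try ring
    rw [e]; exact comb_mem _ _ _ _ _
  · refine ⟨(285258/4915 : ℚ), ?_⟩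
    apply mem_of_C_mul_mem (1165256064000 : ℚ) (by norm_num)
    have e : C (1165256064000:ℚ) * (M3 0 3 0 - (C (285258/4915 : ℚ) * M3 0 0 2)) = 0 * g1 + 0 * g2 + 0 * g3 + (- 47543 * M3 0 0 0) * g4 + (983 * M3 0 0 0) * g5 := by
      simp only [mul_sub, mul_add, ← mul_assoc, ← C_mul]
      norm_num [g1, g2, g3, g4, g5, M3, map_ofNat]
      try ring
    rw [e]; exact comb_mem _ _ _ _ _
  · refine ⟨(5808528/4915 : ℚ), ?_⟩
    apply mem_of_C_mul_mem (693326881382484691568586528000 : ℚ) (by norm_num)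
    have e : C (693326881382484691568586528000:ℚ) * (M3 3 0 1 - (C (5808528/4915 : ℚ) * M3 0 0 2)) = (190229106032628443312000 * M3 2 0 0 - 16510910638434163648704000 * M3 0 1 0) * g1 + (1777245918348482313165 * M3 1 0 0) * g2 + (- 267630639557094774555 * M3 1 0 0) * g3 + (- 576011963962460735232226 * M3 0 0 0) * g4 + (10438156789367224996206 * M3 0 0 0) * g5 := by
      simp only [mul_sub, mul_add, ← mul_assoc, ← C_mul]
      norm_num [g1, g2, g3, g4, g5, M3, map_ofNat]
      try ring
    rw [e]; exact comb_mem _ _ _ _ _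
  · refine ⟨(200564/4915 : ℚ), ?_⟩
    apply mem_of_C_mul_mem (8804890050653087947584000 : ℚ) (by norm_num)
    have e : C (8804890050653087947584000:ℚ) * (M3 1 1 1 - (C (200564/4915 : ℚ) * M3 0 0 2)) = (- 9995233739281056000 * M3 0 1 0) * g1 + (1335933444715170 * M3 1 0 0) * g2 + (- 156918354820990 * M3 1 0 0) * g3 + (- 252583104932488889 * M3 0 0 0) * g4 + (6318962000443809 * M3 0 0 0) * g5 := by
      simp only [mul_sub, mul_add, ← mul_assoc, ← C_mul]
      norm_num [g1, g2, g3, g4, g5, M3, map_ofNat]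
      try ring
    rw [e]; exact comb_mem _ _ _ _ _
  · refine ⟨1, ?_⟩
    have e : M3 0 0 2 - (C (1:ℚ) * M3 0 0 2) = 0 := by
      simp
    rw [e]; exact zero_mem _
lemma red7 : ∀ a b c : ℕ, a + 2*b + 3*c = 7 → ∃ c1 : ℚ,
    M3 a b c - (C c1 * M3 1 0 2) ∈ Ig := by
  intro a b c h
  obtain ⟨rfl, rfl, rfl⟩ | ⟨rfl, rfl, rfl⟩ | ⟨rfl, rfl, rfl⟩ | ⟨rfl, rfl, rfl⟩ | ⟨rfl, rfl, rfl⟩ | ⟨rfl, rfl, rfl⟩ | ⟨rfl, rfl, rfl⟩ | ⟨rfl, rfl, rfl⟩ : (a = 7 ∧ b = 0 ∧ c = 0) ∨ (a = 5 ∧ b = 1 ∧ c = 0) ∨ (a = 3 ∧ b = 2 ∧ c = 0) ∨ (a = 1 ∧ b = 3 ∧ c = 0) ∨ (a = 4 ∧ b = 0 ∧ c = 1) ∨ (a = 2 ∧ b = 1 ∧ c = 1) ∨ (a = 0 ∧ b = 2 ∧ c = 1) ∨ (a = 1 ∧ b = 0 ∧ c = 2) := by omega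
  · refine ⟨(1422489600/983 : ℚ), ?_⟩
    apply mem_of_C_mul_mem (2851755828980117033 : ℚ) (by norm_num)
    have e : C (2851755828980117033:ℚ) * (M3 7 0 0 - (C (1422489600/983 : ℚ) * M3 1 0 2)) = (1613880329152000 * M3 3 0 0 - 4681641509927769600 * M3 1 1 0 - 1132261781016038400 * M3 0 0 1) * g1 + (495047283163253 * M3 2 0 0 + 25060106821932 * M3 0 1 0) * g2 + (- 59445718542542 * M3 2 0 0 + 207235532114316 * M3 0 1 0) * g3 + 0 * g4 + 0 * g5 := by
      simp only [mul_sub, mul_add, ← mul_assoc, ← C_mul]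
      norm_num [g1, g2, g3, g4, g5, M3, map_ofNat]
      try ring
    rw [e]; exact comb_mem _ _ _ _ _
  · refine ⟨(48405888/983 : ℚ), ?_⟩
    apply mem_of_C_mul_mem (10266320984328421318800 : ℚ) (by norm_num)
    have e : C (10266320984328421318800:ℚ) * (M3 5 1 0 - (C (48405888/983 : ℚ) * M3 1 0 2)) = (197707398106816000 * M3 3 0 0 - 452137479795071884800 * M3 1 1 0 - 138707019756597427200 * M3 0 0 1) * g1 + (47579590348172529 * M3 2 0 0 + 3069972677990556 * M3 0 1 0) * g2 + (- 5739265539443003 * M3 2 0 0 + 20014123468330908 * M3 0 1 0) * g3 + 0 * g4 + 0 * g5 := by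
      simp only [mul_sub, mul_add, ← mul_assoc, ← C_mul]
      norm_num [g1, g2, g3, g4, g5, M3, map_ofNat]
      try ring
    rw [e]; exact comb_mem _ _ _ _ _
  · refine ⟨(8285224/4915 : ℚ), ?_⟩
    apply mem_of_C_mul_mem (22175253326149390048608000 : ℚ) (by norm_num)
    have e : C (22175253326149390048608000:ℚ) * (M3 3 2 0 - (C (8285224/4915 : ℚ) * M3 1 0 2)) = (14618833858838976000 * M3 3 0 0 - 24715951545853674892800 * M3 1 1 0 - 10256241781002360499200 * M3 0 0 1) * g1 + (2579934233572602169 * M3 2 0 0 + 226999196592895116 * M3 0 1 0) * g2 + (- 312260833926598483 * M3 2 0 0 + 1094065694576358588 * M3 0 1 0) * g3 + 0 * g4 + 0 * g5 := by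
      simp only [mul_sub, mul_add, ← mul_assoc, ← C_mul]
      norm_num [g1, g2, g3, g4, g5, M3, map_ofNat]
      try ring
    rw [e]; exact comb_mem _ _ _ _ _
  · refine ⟨(285258/4915 : ℚ), ?_⟩
    apply mem_of_C_mul_mem (368450362957559096192256000 : ℚ) (by norm_num)
    have e : C (368450362957559096192256000:ℚ) * (M3 1 3 0 - (C (285258/4915 : ℚ) * M3 1 0 2)) = (8362896225519744000 * M3 3 0 0 - 9353538267168568435200 * M3 1 1 0 - 5867218035760242124800 * M3 0 0 1) * g1 + (960765710925782131 * M3 2 0 0 + 129857876675636904 * M3 0 1 0) * g2 + (- 117077484569801617 * M3 2 0 0 + 435802990274683272 * M3 0 1 0) * g3 + 0 * g4 + 0 * g5 := by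
      simp only [mul_sub, mul_add, ← mul_assoc, ← C_mul]
      norm_num [g1, g2, g3, g4, g5, M3, map_ofNat]
      try ring
    rw [e]; exact comb_mem _ _ _ _ _
  · refine ⟨(5808528/4915 : ℚ), ?_⟩
    apply mem_of_C_mul_mem (21613307335428255408000 : ℚ) (by norm_num)
    have e : C (21613307335428255408000:ℚ) * (M3 4 0 1 - (C (5808528/4915 : ℚ) * M3 1 0 2)) = (15919193960904000 * M3 3 0 0 - 13886925730661721600 * M3 1 1 0 - 7008139245180902400 * M3 0 0 1) * g1 + (1439786851734493 * M3 2 0 0 + 155109640766652 * M3 0 1 0) * g2 + (- 176368966811551 * M3 2 0 0 + 614712689368236 * M3 0 1 0) * g3 + 0 * g4 + 0 * g5 := by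
      simp only [mul_sub, mul_add, ← mul_assoc, ← C_mul]
      norm_num [g1, g2, g3, g4, g5, M3, map_ofNat]
      try ring
    rw [e]; exact comb_mem _ _ _ _ _
  · refine ⟨(200564/4915 : ℚ), ?_⟩
    apply mem_of_C_mul_mem (1556158128150834389376000 : ℚ) (by norm_num)
    have e : C (1556158128150834389376000:ℚ) * (M3 2 1 1 - (C (200564/4915 : ℚ) * M3 1 0 2)) = (24833995268992000 * M3 3 0 0 - 20248145099900697600 * M3 1 1 0 - 17422966997675366400 * M3 0 0 1) * g1 + (2088718936761513 * M3 2 0 0 + 385618786606872 * M3 0 1 0) * g2 + (- 256332865894691 * M3 2 0 0 + 896295693552696 * M3 0 1 0) * g3 + 0 * g4 + 0 * g5 := by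
      simp only [mul_sub, mul_add, ← mul_assoc, ← C_mul]
      norm_num [g1, g2, g3, g4, g5, M3, map_ofNat]
      try ring
    rw [e]; exact comb_mem _ _ _ _ _
  · refine ⟨(13927/9830 : ℚ), ?_⟩
    apply mem_of_C_mul_mem (126048808380217585539456000 : ℚ) (by norm_num)
    have e : C (126048808380217585539456000:ℚ) * (M3 0 2 1 - (C (13927/9830 : ℚ) * M3 1 0 2)) = (69840318354768000 * M3 3 0 0 - 20260299342379622400 * M3 1 1 0 - 48998380994362425600 * M3 0 0 1) * g1 + (1796212142369137 * M3 2 0 0 + 4807137486198528 * M3 0 1 0) * g2 + (- 233587485324859 * M3 2 0 0 + 896833708029504 * M3 0 1 0) * g3 + 0 * g4 + 0 * g5 := by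
      simp only [mul_sub, mul_add, ← mul_assoc, ← C_mul]
      norm_num [g1, g2, g3, g4, g5, M3, map_ofNat]
      try ring
    rw [e]; exact comb_mem _ _ _ _ _
  · refine ⟨1, ?_⟩
    have e : M3 1 0 2 - (C (1:ℚ) * M3 1 0 2) = 0 := by
      simp
    rw [e]; exact zero_mem _

lemma c800 : (M3 8 0 0 : S) ∈ Ig := by
  apply mem_of_C_mul_mem (443864335538105703 : ℚ) (by norm_num)
  have e : C (443864335538105703:ℚ) * (M3 8 0 0 : S) = (- 858111459330552000 * M3 4 0 0 + 25813528037174016000 * M3 2 1 0) * g1 + (2730983515574290 * M3 3 0 0 - 81653493823272000 * M3 1 1 0) * g2 + (- 93550943526991 * M3 3 0 0 - 1142650544085360 * M3 1 1 0 + 163306987646544000 * M3 0 0 1) * g3 + 0 * g4 + 0 * g5 := by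
    simp only [← mul_assoc]
    norm_num [g1, g2, g3, g4, g5, M3, map_ofNat]
    try ring
  rw [e]; exact comb_mem _ _ _ _ _

lemma c610 : (M3 6 1 0 : S) ∈ Ig := by
  apply mem_of_C_mul_mem (31958232158743610616 : ℚ) (by norm_num)
  have e : C (31958232158743610616:ℚ) * (M3 6 1 0 : S) = (- 2102448128840260320 * M3 4 0 0 + 63623260316245939200 * M3 2 1 0) * g1 + (6650475481491065 * M3 3 0 0 - 200058201572015520 * M3 1 1 0) * g2 + (- 224404463376755 * M3 3 0 0 - 2816319912262632 * M3 1 1 0 + 400116403144031040 * M3 0 0 1) * g3 + 0 * g4 + 0 * g5 := by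
    simp only [← mul_assoc]
    norm_num [g1, g2, g3, g4, g5, M3, map_ofNat]
    try ring
  rw [e]; exact comb_mem _ _ _ _ _

lemma c420 : (M3 4 2 0 : S) ∈ Ig := by
  apply mem_of_C_mul_mem (23009927154295399643520 : ℚ) (by norm_num)
  have e : C (23009927154295399643520:ℚ) * (M3 4 2 0 : S) = (- 51819574763269047840 * M3 4 0 0 + 1577182665638251008000 * M3 2 1 0) * g1 + (162942466038934729 * M3 3 0 0 - 4930885471635750240 * M3 1 1 0) * g2 + (- 5414623574644003 * M3 3 0 0 - 69814890410107680 * M3 1 1 0 + 9861770943271500480 * M3 0 0 1) * g3 + 0 * g4 + 0 * g5 := by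
    simp only [← mul_assoc]
    norm_num [g1, g2, g3, g4, g5, M3, map_ofNat]
    try ring
  rw [e]; exact comb_mem _ _ _ _ _

lemma c230 : (M3 2 3 0 : S) ∈ Ig := by
  apply mem_of_C_mul_mem (16567147551092687743334400 : ℚ) (by norm_num)
  have e : C (16567147551092687743334400:ℚ) * (M3 2 3 0 : S) = (- 1284576342852146601600 * M3 4 0 0 + 39312596557416041971200 * M3 2 1 0) * g1 + (4016084480368901423 * M3 3 0 0 - 122233709078338377600 * M3 1 1 0) * g2 + (- 131457485250385061 * M3 3 0 0 - 1739215939927608000 * M3 1 1 0 + 244467418156676755200 * M3 0 0 1) * g3 + 0 * g4 + 0 * g5 := by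
    simp only [← mul_assoc]
    norm_num [g1, g2, g3, g4, g5, M3, map_ofNat]
    try ring
  rw [e]; exact comb_mem _ _ _ _ _

lemma c040 : (M3 0 4 0 : S) ∈ Ig := by
  apply mem_of_C_mul_mem (459837747428128641003989606400 : ℚ) (by norm_num)
  have e : C (459837747428128641003989606400:ℚ) * (M3 0 4 0 : S) = (- 1233643709257887908008000 * M3 4 0 0 + 37929948557014045708070400 * M3 2 1 0 + 613598057447877323827200 * M3 0 2 0) * g1 + (3837896840485538678421 * M3 3 0 0 - 117453268510297917830172 * M3 1 1 0) * g2 + (- 123980512097548208647 * M3 3 0 0 - 1669357739156187081996 * M3 1 1 0 + 234774440776241233776000 * M3 0 0 1) * g3 + 0 * g4 + 0 * g5 := by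
    simp only [← mul_assoc]
    norm_num [g1, g2, g3, g4, g5, M3, map_ofNat]
    try ring
  rw [e]; exact comb_mem _ _ _ _ _

lemma c501 : (M3 5 0 1 : S) ∈ Ig := by
  apply mem_of_C_mul_mem (67280488755249706560 : ℚ) (by norm_num)
  have e : C (67280488755249706560:ℚ) * (M3 5 0 1 : S) = (- 106207232758339200 * M3 4 0 0 + 3242433208315392000 * M3 2 1 0) * g1 + (333012340293799 * M3 3 0 0 - 10107893142087840 * M3 1 1 0) * g2 + (- 10984335698893 * M3 3 0 0 - 143528155636320 * M3 1 1 0 + 20215786284175680 * M3 0 0 1) * g3 + 0 * g4 + 0 * g5 := by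
    simp only [← mul_assoc]
    norm_num [g1, g2, g3, g4, g5, M3, map_ofNat]
    try ring
  rw [e]; exact comb_mem _ _ _ _ _

lemma c311 : (M3 3 1 1 : S) ∈ Ig := by
  apply mem_of_C_mul_mem (48441951903779788723200 : ℚ) (by norm_num)
  have e : C (48441951903779788723200:ℚ) * (M3 3 1 1 : S) = (- 2640881797286678400 * M3 4 0 0 + 81054686908892160000 * M3 2 1 0) * g1 + (8232629415280193 * M3 3 0 0 - 251292793235702400 * M3 1 1 0) * g2 + (- 267412236337451 * M3 3 0 0 - 3587931954273600 * M3 1 1 0 + 502585586471404800 * M3 0 0 1) * g3 + 0 * g4 + 0 * g5 := by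
    simp only [← mul_assoc]
    norm_num [g1, g2, g3, g4, g5, M3, map_ofNat]
    try ring
  rw [e]; exact comb_mem _ _ _ _ _

lemma c121 : (M3 1 2 1 : S) ∈ Ig := by
  apply mem_of_C_mul_mem (1743910268536072394035200 : ℚ) (by norm_num)
  have e : C (1743910268536072394035200:ℚ) * (M3 1 2 1 : S) = (- 3300852068340321600 * M3 4 0 0 + 101818200728303193600 * M3 2 1 0) * g1 + (10233588802131149 * M3 3 0 0 - 314040682027049292 * M3 1 1 0) * g2 + (- 327498152671343 * M3 3 0 0 - 4507040738191356 * M3 1 1 0 + 628184371722595200 * M3 0 0 1) * g3 + 0 * g4 + 0 * g5 := by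
    simp only [← mul_assoc]
    norm_num [g1, g2, g3, g4, g5, M3, map_ofNat]
    try ring
  rw [e]; exact comb_mem _ _ _ _ _

lemma c202 : (M3 2 0 2 : S) ∈ Ig := by
  apply mem_of_C_mul_mem (96883903807559577446400 : ℚ) (by norm_num)
  have e : C (96883903807559577446400:ℚ) * (M3 2 0 2 : S) = (- 129472224675816000 * M3 4 0 0 + 4003527575811110400 * M3 2 1 0 + 26582177765145600 * M3 1 0 1) * g1 + (400309124057933 * M3 3 0 0 - 12316897134359388 * M3 1 1 0) * g2 + (- 12715265083631 * M3 3 0 0 - 177218431985484 * M3 1 1 0 + 24632617593456000 * M3 0 0 1) * g3 + 0 * g4 + 0 * g5 := by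
    simp only [← mul_assoc]
    norm_num [g1, g2, g3, g4, g5, M3, map_ofNat]
    try ring
  rw [e]; exact comb_mem _ _ _ _ _

lemma c012 : (M3 0 1 2 : S) ∈ Ig := by
  apply mem_of_C_mul_mem (6975641074144289576140800 : ℚ) (by norm_num)
  have e : C (6975641074144289576140800:ℚ) * (M3 0 1 2 : S) = (- 326206795976121600 * M3 4 0 0 + 10133325484761830400 * M3 2 1 0) * g1 + (1003426590308395 * M3 3 0 0 - 31027859717870088 * M3 1 1 0 + 206015336993232 * M3 0 0 1) * g2 + (- 31420016454265 * M3 3 0 0 - 448557433214184 * M3 1 1 0 + 62055719435740176 * M3 0 0 1) * g3 + 0 * g4 + 0 * g5 := by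
    simp only [← mul_assoc]
    norm_num [g1, g2, g3, g4, g5, M3, map_ofNat]
    try ring
  rw [e]; exact comb_mem _ _ _ _ _

lemma c031 : (M3 0 3 1 : S) ∈ Ig := by
  apply mem_of_C_mul_mem (13951282148288579152281600 : ℚ) (by norm_num)
  have e : C (13951282148288579152281600:ℚ) * (M3 0 3 1 : S) = (- 26406816546722572800 * M3 3 1 0 + 814545605826425548800 * M3 1 2 0) * g1 + (2842448121243703 * M3 4 0 0 - 87678256212826088 * M3 2 1 0 + 412030673986464 * M3 0 2 0) * g2 + (- 339665047633021 * M3 4 0 0 + 11526142420575416 * M3 2 1 0 - 36056325905530848 * M3 0 2 0) * g3 + 0 * g4 + 0 * g5 := by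
    simp only [← mul_assoc]
    norm_num [g1, g2, g3, g4, g5, M3, map_ofNat]
    try ring
  rw [e]; exact comb_mem _ _ _ _ _

lemma c003 : (M3 0 0 3 : S) ∈ Ig := by
  apply mem_of_C_mul_mem (95705795537259652984651776000 : ℚ) (by norm_num)
  have e : C (95705795537259652984651776000:ℚ) * (M3 0 0 3 : S) = (18146028293845920 * M3 5 0 0 - 3041146533195460339200 * M3 3 1 0 + 92307642893505718272000 * M3 1 2 0) * g1 + (327351130508804417 * M3 4 0 0 - 9936058958672346720 * M3 2 1 0) * g2 + (- 39122518317115019 * M3 4 0 0 + 1308078879836548320 * M3 2 1 0 - 4086050470265301120 * M3 0 2 0) * g3 + (67280488755249706560 * M3 0 0 1) * g4 + 0 * g5 := by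
    simp only [← mul_assoc]
    norm_num [g1, g2, g3, g4, g5, M3, map_ofNat]
    try ring
  rw [e]; exact comb_mem _ _ _ _ _

lemma memI_high : ∀ N a b c : ℕ, a + b + c ≤ N → 8 ≤ a + 2*b + 3*c → (M3 a b c : S) ∈ Ig := by
  intro N
  induction N with
  | zero => intro a b c h1 h2; omega
  | succ N ih =>
    intro a b c h1 h2
    by_cases h8 : a + 2*b + 3*c = 8
    · obtain rfl | rfl | rfl : c = 0 ∨ c = 1 ∨ c = 2 := by omega
      · obtain rfl | rfl | rfl | rfl | rfl : b = 0 ∨ b = 1 ∨ b = 2 ∨ b = 3 ∨ b = 4 := by omega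
        · obtain rfl : a = 8 := by omega
          exact c800
        · obtain rfl : a = 6 := by omega
          exact c610
        · obtain rfl : a = 4 := by omega
          exact c420
        · obtain rfl : a = 2 := by omega
          exact c230
        · obtain rfl : a = 0 := by omega
          exact c040
      · obtain rfl | rfl | rfl : b = 0 ∨ b = 1 ∨ b = 2 := by omega
        · obtain rfl : a = 5 := by omega
          exact c501
        · obtain rfl : a = 3 := by omega
          exact c311
        · obtain rfl : a = 1 := by omega
          exact c121
      · obtain rfl | rfl : b = 0 ∨ b = 1 := by omega
        · obtain rfl : a = 2 := by omega
          exact c202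
        · obtain rfl : a = 0 := by omega
          exact c012
    · by_cases h91 : a = 0 ∧ b = 3 ∧ c = 1
      · obtain ⟨rfl, rfl, rfl⟩ := h91; exact c031
      by_cases h92 : a = 0 ∧ b = 0 ∧ c = 3
      · obtain ⟨rfl, rfl, rfl⟩ := h92; exact c003
      obtain ⟨a', rfl, hw⟩ | ⟨b', rfl, hw⟩ | ⟨c', rfl, hw⟩ :
          (∃ a', a = a' + 1 ∧ 8 ≤ a' + 2*b + 3*c) ∨
          (∃ b', b = b' + 1 ∧ 8 ≤ a + 2*b' + 3*c) ∨
          (∃ c', c = c' + 1 ∧ 8 ≤ a + 2*b + 3*c') := by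
        by_cases ha : 0 < a
        · exact Or.inl ⟨a - 1, by omega, by omega⟩
        · by_cases hb : 0 < b
          · exact Or.inr (Or.inl ⟨b - 1, by omega, by omega⟩)
          · exact Or.inr (Or.inr ⟨c - 1, by omega, by omega⟩)
      · have e : M3 (a' + 1) b c = X 0 * M3 a' b c := by unfold M3; ring
        rw [e]; exact Ideal.mul_mem_left _ _ (ih a' b c (by omega) hw)
      · have e : M3 a (b' + 1) c = X 1 * M3 a b' c := by unfold M3; ring
        rw [e]; exact Ideal.mul_mem_left _ _ (ih a b' c (by omega) hw)
      · have e : M3 a b (c' + 1) = X 2 * M3 a b c' := by unfold M3; ring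
        rw [e]; exact Ideal.mul_mem_left _ _ (ih a b c' (by omega) hw)
lemma span_gen {k j : ℕ} (Bs : Fin k → S)
    (hred : ∀ u : Fin 3 →₀ ℕ, u 0 + 2 * u 1 + 3 * u 2 = j → ∀ r : ℚ,
      ∃ co : Fin k → ℚ, (monomial u r : S) - ∑ t, C (co t) * Bs t ∈ Ig) :
    ∀ p : S, IsWeightedHomogeneous W p j →
      ∃ co : Fin k → ℚ, p - ∑ t, C (co t) * Bs t ∈ Ig := by
  intro p hp
  have key : ∀ s : Finset (Fin 3 →₀ ℕ), (∀ u ∈ s, u 0 + 2*u 1 + 3*u 2 = j) →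
      ∀ f : (Fin 3 →₀ ℕ) → ℚ, ∃ co : Fin k → ℚ,
        (∑ u ∈ s, (monomial u (f u) : S)) - ∑ t, C (co t) * Bs t ∈ Ig := by
    intro s
    induction s using Finset.induction_on with
    | empty => intro _ f; exact ⟨0, by simp⟩
    | @insert a s hna ih =>
      intro hall f
      obtain ⟨co1, hco1⟩ := ih (fun u hu => hall u (Finset.mem_insert_of_mem hu)) f
      obtain ⟨co2, hco2⟩ := hred a (hall a (Finset.mem_insert_self _ _)) (f a)
      refine ⟨co1 + co2, ?_⟩
      rw [Finset.sum_insert hna]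
      have e2 : (∑ t, C ((co1 + co2) t) * Bs t)
          = (∑ t, C (co1 t) * Bs t) + (∑ t, C (co2 t) * Bs t) := by
        rw [← Finset.sum_add_distrib]
        refine Finset.sum_congr rfl fun t _ => ?_
        rw [Pi.add_apply, C_add, add_mul]
      rw [e2, show (monomial a (f a) : S) + (∑ u ∈ s, (monomial u (f u) : S))
            - ((∑ t, C (co1 t) * Bs t) + ∑ t, C (co2 t) * Bs t)
          = ((monomial a (f a) : S) - ∑ t, C (co2 t) * Bs t)
            + ((∑ u ∈ s, (monomial u (f u) : S)) - ∑ t, C (co1 t) * Bs t) by ring]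
      exact add_mem hco2 hco1
  obtain ⟨co, hco⟩ := key p.support
    (fun u hu => by
      have h1 := hp (mem_support_iff.mp hu); rw [wt_eq] at h1; exact h1)
    (fun u => coeff u p)
  rw [support_sum_monomial_coeff p] at hco
  exact ⟨co, hco⟩
lemma gamv_700 : gam 7 0 0 = 14224896000 := by norm_num [gam]

lemma gamv_510 : gam 5 1 0 = 484058880 := by norm_num [gam]

lemma gamv_320 : gam 3 2 0 = 16570448 := by norm_num [gam]

lemma gamv_130 : gam 1 3 0 = 570516 := by norm_num [gam]

lemma gamv_401 : gam 4 0 1 = 11617056 := by norm_num [gam]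

lemma gamv_211 : gam 2 1 1 = 401128 := by norm_num [gam]

lemma gamv_021 : gam 0 2 1 = 13927 := by norm_num [gam]

lemma gamv_102 : gam 1 0 2 = 9830 := by norm_num [gam]

lemma pair0 (c1 : ℚ) (h1 : (C c1 * M3 0 0 0) * M3 1 0 2 ∈ Ig) : c1 = 0 := by
  have e1 : (C c1 * M3 0 0 0) * M3 1 0 2 = C c1 * M3 1 0 2 := by unfold M3; ring
  have l1 := L_vanish h1
  rw [e1] at l1
  simp only [map_add, L_CM3, gamv_700, gamv_510, gamv_320, gamv_130, gamv_401, gamv_211, gamv_021, gamv_102] at l1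
  linear_combination (1/9830 : ℚ) * l1

lemma pair1 (c1 : ℚ) (h1 : (C c1 * M3 1 0 0) * M3 0 0 2 ∈ Ig) : c1 = 0 := by
  have e1 : (C c1 * M3 1 0 0) * M3 0 0 2 = C c1 * M3 1 0 2 := by unfold M3; ring
  have l1 := L_vanish h1
  rw [e1] at l1
  simp only [map_add, L_CM3, gamv_700, gamv_510, gamv_320, gamv_130, gamv_401, gamv_211, gamv_021, gamv_102] at l1
  linear_combination (1/9830 : ℚ) * l1

lemma pair2 (c1 c2 : ℚ) (h1 : (C c1 * M3 2 0 0 + C c2 * M3 0 1 0) * M3 2 0 1 ∈ Ig) (h2 : (C c1 * M3 2 0 0 + C c2 * M3 0 1 0) * M3 0 1 1 ∈ Ig) : c1 = 0 ∧ c2 = 0 := by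
  have e1 : (C c1 * M3 2 0 0 + C c2 * M3 0 1 0) * M3 2 0 1 = C c1 * M3 4 0 1 + C c2 * M3 2 1 1 := by unfold M3; ring
  have e2 : (C c1 * M3 2 0 0 + C c2 * M3 0 1 0) * M3 0 1 1 = C c1 * M3 2 1 1 + C c2 * M3 0 2 1 := by unfold M3; ring
  have l1 := L_vanish h1
  rw [e1] at l1
  simp only [map_add, L_CM3, gamv_700, gamv_510, gamv_320, gamv_130, gamv_401, gamv_211, gamv_021, gamv_102] at l1
  have l2 := L_vanish h2
  rw [e2] at l2
  simp only [map_add, L_CM3, gamv_700, gamv_510, gamv_320, gamv_130, gamv_401, gamv_211, gamv_021, gamv_102] at l2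
  refine ⟨?_, ?_⟩
  · linear_combination (733/46687712 : ℚ) * l1 + (-2639/5835964 : ℚ) * l2
  · linear_combination (-2639/5835964 : ℚ) * l1 + (19107/1458991 : ℚ) * l2

lemma pair3 (c1 c2 c3 : ℚ) (h1 : (C c1 * M3 3 0 0 + C c2 * M3 1 1 0 + C c3 * M3 0 0 1) * M3 2 1 0 ∈ Ig) (h2 : (C c1 * M3 3 0 0 + C c2 * M3 1 1 0 + C c3 * M3 0 0 1) * M3 0 2 0 ∈ Ig) (h3 : (C c1 * M3 3 0 0 + C c2 * M3 1 1 0 + C c3 * M3 0 0 1) * M3 1 0 1 ∈ Ig) : c1 = 0 ∧ c2 = 0 ∧ c3 = 0 := by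
  have e1 : (C c1 * M3 3 0 0 + C c2 * M3 1 1 0 + C c3 * M3 0 0 1) * M3 2 1 0 = C c1 * M3 5 1 0 + C c2 * M3 3 2 0 + C c3 * M3 2 1 1 := by unfold M3; ring
  have e2 : (C c1 * M3 3 0 0 + C c2 * M3 1 1 0 + C c3 * M3 0 0 1) * M3 0 2 0 = C c1 * M3 3 2 0 + C c2 * M3 1 3 0 + C c3 * M3 0 2 1 := by unfold M3; ring
  have e3 : (C c1 * M3 3 0 0 + C c2 * M3 1 1 0 + C c3 * M3 0 0 1) * M3 1 0 1 = C c1 * M3 4 0 1 + C c2 * M3 2 1 1 + C c3 * M3 1 0 2 := by unfold M3; ring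
  have l1 := L_vanish h1
  rw [e1] at l1
  simp only [map_add, L_CM3, gamv_700, gamv_510, gamv_320, gamv_130, gamv_401, gamv_211, gamv_021, gamv_102] at l1
  have l2 := L_vanish h2
  rw [e2] at l2
  simp only [map_add, L_CM3, gamv_700, gamv_510, gamv_320, gamv_130, gamv_401, gamv_211, gamv_021, gamv_102] at l2
  have l3 := L_vanish h3
  rw [e3] at l3
  simp only [map_add, L_CM3, gamv_700, gamv_510, gamv_320, gamv_130, gamv_401, gamv_211, gamv_021, gamv_102] at l3
  refine ⟨?_, ?_, ?_⟩
  · linear_combination (-39821/8376501120 : ℚ) * l1 + (1215583/2792167040 : ℚ) * l2 + (-372811/881736960 : ℚ) * l3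
  · linear_combination (126007/523531320 : ℚ) * l1 + (-7534647/349020880 : ℚ) * l2 + (2288539/110217120 : ℚ) * l3
  · linear_combination (-115823/27554280 : ℚ) * l1 + (3365559/9184760 : ℚ) * l2 + (-19151377/55108560 : ℚ) * l3

lemma pair4 (c1 c2 c3 : ℚ) (h1 : (C c1 * M3 2 1 0 + C c2 * M3 0 2 0 + C c3 * M3 1 0 1) * M3 3 0 0 ∈ Ig) (h2 : (C c1 * M3 2 1 0 + C c2 * M3 0 2 0 + C c3 * M3 1 0 1) * M3 1 1 0 ∈ Ig) (h3 : (C c1 * M3 2 1 0 + C c2 * M3 0 2 0 + C c3 * M3 1 0 1) * M3 0 0 1 ∈ Ig) : c1 = 0 ∧ c2 = 0 ∧ c3 = 0 := by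
  have e1 : (C c1 * M3 2 1 0 + C c2 * M3 0 2 0 + C c3 * M3 1 0 1) * M3 3 0 0 = C c1 * M3 5 1 0 + C c2 * M3 3 2 0 + C c3 * M3 4 0 1 := by unfold M3; ring
  have e2 : (C c1 * M3 2 1 0 + C c2 * M3 0 2 0 + C c3 * M3 1 0 1) * M3 1 1 0 = C c1 * M3 3 2 0 + C c2 * M3 1 3 0 + C c3 * M3 2 1 1 := by unfold M3; ring
  have e3 : (C c1 * M3 2 1 0 + C c2 * M3 0 2 0 + C c3 * M3 1 0 1) * M3 0 0 1 = C c1 * M3 2 1 1 + C c2 * M3 0 2 1 + C c3 * M3 1 0 2 := by unfold M3; ring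
  have l1 := L_vanish h1
  rw [e1] at l1
  simp only [map_add, L_CM3, gamv_700, gamv_510, gamv_320, gamv_130, gamv_401, gamv_211, gamv_021, gamv_102] at l1
  have l2 := L_vanish h2
  rw [e2] at l2
  simp only [map_add, L_CM3, gamv_700, gamv_510, gamv_320, gamv_130, gamv_401, gamv_211, gamv_021, gamv_102] at l2
  have l3 := L_vanish h3
  rw [e3] at l3
  simp only [map_add, L_CM3, gamv_700, gamv_510, gamv_320, gamv_130, gamv_401, gamv_211, gamv_021, gamv_102] at l3
  refine ⟨?_, ?_, ?_⟩
  · linear_combination (-39821/8376501120 : ℚ) * l1 + (126007/523531320 : ℚ) * l2 + (-115823/27554280 : ℚ) * l3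
  · linear_combination (1215583/2792167040 : ℚ) * l1 + (-7534647/349020880 : ℚ) * l2 + (3365559/9184760 : ℚ) * l3
  · linear_combination (-372811/881736960 : ℚ) * l1 + (2288539/110217120 : ℚ) * l2 + (-19151377/55108560 : ℚ) * l3

lemma pair5 (c1 c2 : ℚ) (h1 : (C c1 * M3 2 0 1 + C c2 * M3 0 1 1) * M3 2 0 0 ∈ Ig) (h2 : (C c1 * M3 2 0 1 + C c2 * M3 0 1 1) * M3 0 1 0 ∈ Ig) : c1 = 0 ∧ c2 = 0 := by
  have e1 : (C c1 * M3 2 0 1 + C c2 * M3 0 1 1) * M3 2 0 0 = C c1 * M3 4 0 1 + C c2 * M3 2 1 1 := by unfold M3; ring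
  have e2 : (C c1 * M3 2 0 1 + C c2 * M3 0 1 1) * M3 0 1 0 = C c1 * M3 2 1 1 + C c2 * M3 0 2 1 := by unfold M3; ring
  have l1 := L_vanish h1
  rw [e1] at l1
  simp only [map_add, L_CM3, gamv_700, gamv_510, gamv_320, gamv_130, gamv_401, gamv_211, gamv_021, gamv_102] at l1
  have l2 := L_vanish h2
  rw [e2] at l2
  simp only [map_add, L_CM3, gamv_700, gamv_510, gamv_320, gamv_130, gamv_401, gamv_211, gamv_021, gamv_102] at l2
  refine ⟨?_, ?_⟩
  · linear_combination (733/46687712 : ℚ) * l1 + (-2639/5835964 : ℚ) * l2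
  · linear_combination (-2639/5835964 : ℚ) * l1 + (19107/1458991 : ℚ) * l2

lemma pair6 (c1 : ℚ) (h1 : (C c1 * M3 0 0 2) * M3 1 0 0 ∈ Ig) : c1 = 0 := by
  have e1 : (C c1 * M3 0 0 2) * M3 1 0 0 = C c1 * M3 1 0 2 := by unfold M3; ring
  have l1 := L_vanish h1
  rw [e1] at l1
  simp only [map_add, L_CM3, gamv_700, gamv_510, gamv_320, gamv_130, gamv_401, gamv_211, gamv_021, gamv_102] at l1
  linear_combination (1/9830 : ℚ) * l1

lemma pair7 (c1 : ℚ) (h1 : (C c1 * M3 1 0 2) * M3 0 0 0 ∈ Ig) : c1 = 0 := by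
  have e1 : (C c1 * M3 1 0 2) * M3 0 0 0 = C c1 * M3 1 0 2 := by unfold M3; ring
  have l1 := L_vanish h1
  rw [e1] at l1
  simp only [map_add, L_CM3, gamv_700, gamv_510, gamv_320, gamv_130, gamv_401, gamv_211, gamv_021, gamv_102] at l1
  linear_combination (1/9830 : ℚ) * l1

def Bas0 : Fin 1 → S := ![M3 0 0 0]

lemma hBas0 : ∀ t, IsWeightedHomogeneous W (Bas0 t) 0 := by
  intro t
  fin_cases t
  · exact hom_M3 0 0 0 (by norm_num)

def Bas1 : Fin 1 → S := ![M3 1 0 0]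

lemma hBas1 : ∀ t, IsWeightedHomogeneous W (Bas1 t) 1 := by
  intro t
  fin_cases t
  · exact hom_M3 1 0 0 (by norm_num)

def Bas2 : Fin 2 → S := ![M3 2 0 0, M3 0 1 0]

lemma hBas2 : ∀ t, IsWeightedHomogeneous W (Bas2 t) 2 := by
  intro t
  fin_cases t
  · exact hom_M3 2 0 0 (by norm_num)
  · exact hom_M3 0 1 0 (by norm_num)

def Bas3 : Fin 3 → S := ![M3 3 0 0, M3 1 1 0, M3 0 0 1]

lemma hBas3 : ∀ t, IsWeightedHomogeneous W (Bas3 t) 3 := by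
  intro t
  fin_cases t
  · exact hom_M3 3 0 0 (by norm_num)
  · exact hom_M3 1 1 0 (by norm_num)
  · exact hom_M3 0 0 1 (by norm_num)

def Bas4 : Fin 3 → S := ![M3 2 1 0, M3 0 2 0, M3 1 0 1]

lemma hBas4 : ∀ t, IsWeightedHomogeneous W (Bas4 t) 4 := by
  intro t
  fin_cases t
  · exact hom_M3 2 1 0 (by norm_num)
  · exact hom_M3 0 2 0 (by norm_num)
  · exact hom_M3 1 0 1 (by norm_num)

def Bas5 : Fin 2 → S := ![M3 2 0 1, M3 0 1 1]

lemma hBas5 : ∀ t, IsWeightedHomogeneous W (Bas5 t) 5 := by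
  intro t
  fin_cases t
  · exact hom_M3 2 0 1 (by norm_num)
  · exact hom_M3 0 1 1 (by norm_num)

def Bas6 : Fin 1 → S := ![M3 0 0 2]

lemma hBas6 : ∀ t, IsWeightedHomogeneous W (Bas6 t) 6 := by
  intro t
  fin_cases t
  · exact hom_M3 0 0 2 (by norm_num)

def Bas7 : Fin 1 → S := ![M3 1 0 2]

lemma hBas7 : ∀ t, IsWeightedHomogeneous W (Bas7 t) 7 := by
  intro t
  fin_cases t
  · exact hom_M3 1 0 2 (by norm_num)

lemma hred0 : ∀ u : Fin 3 →₀ ℕ, u 0 + 2 * u 1 + 3 * u 2 = 0 → ∀ r : ℚ,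
    ∃ co : Fin 1 → ℚ, (monomial u r : S) - ∑ t, C (co t) * Bas0 t ∈ Ig := by
  intro u hu r
  obtain ⟨c1, hc⟩ := red0 (u 0) (u 1) (u 2) hu
  refine ⟨![r*c1], ?_⟩
  rw [Fin.sum_univ_one]
  rw [mono_eq u r]
  have e : C r * M3 (u 0) (u 1) (u 2) - (C (![r*c1] 0) * Bas0 0)
      = C r * (M3 (u 0) (u 1) (u 2) - (C c1 * Bas0 0)) := by
    show C r * M3 (u 0) (u 1) (u 2) - (C (r*c1) * Bas0 0) = _
    simp only [C_mul]; ring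
  rw [e]
  exact Ideal.mul_mem_left _ _ hc

lemma hspan0 : ∀ p : S, IsWeightedHomogeneous W p 0 →
    ∃ co : Fin 1 → ℚ, p - ∑ t, C (co t) * Bas0 t ∈ Ig :=
  span_gen Bas0 hred0

lemma pairF0 : ∀ co : Fin 1 → ℚ,
    (∀ s : Fin 1, (∑ t, C (co t) * Bas0 t) * Bas7 s ∈ Ig) → ∀ t, co t = 0 := by
  intro co hs
  have h1 := hs 0
  simp only [Fin.sum_univ_one] at h1
  have hz := pair0 (co 0) h1
  intro t
  fin_cases t
  · exact hz

lemma hred1 : ∀ u : Fin 3 →₀ ℕ, u 0 + 2 * u 1 + 3 * u 2 = 1 → ∀ r : ℚ,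
    ∃ co : Fin 1 → ℚ, (monomial u r : S) - ∑ t, C (co t) * Bas1 t ∈ Ig := by
  intro u hu r
  obtain ⟨c1, hc⟩ := red1 (u 0) (u 1) (u 2) hu
  refine ⟨![r*c1], ?_⟩
  rw [Fin.sum_univ_one]
  rw [mono_eq u r]
  have e : C r * M3 (u 0) (u 1) (u 2) - (C (![r*c1] 0) * Bas1 0)
      = C r * (M3 (u 0) (u 1) (u 2) - (C c1 * Bas1 0)) := by
    show C r * M3 (u 0) (u 1) (u 2) - (C (r*c1) * Bas1 0) = _
    simp only [C_mul]; ring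
  rw [e]
  exact Ideal.mul_mem_left _ _ hc

lemma hspan1 : ∀ p : S, IsWeightedHomogeneous W p 1 →
    ∃ co : Fin 1 → ℚ, p - ∑ t, C (co t) * Bas1 t ∈ Ig :=
  span_gen Bas1 hred1

lemma pairF1 : ∀ co : Fin 1 → ℚ,
    (∀ s : Fin 1, (∑ t, C (co t) * Bas1 t) * Bas6 s ∈ Ig) → ∀ t, co t = 0 := by
  intro co hs
  have h1 := hs 0
  simp only [Fin.sum_univ_one] at h1
  have hz := pair1 (co 0) h1
  intro t
  fin_cases t
  · exact hz

lemma hred2 : ∀ u : Fin 3 →₀ ℕ, u 0 + 2 * u 1 + 3 * u 2 = 2 → ∀ r : ℚ,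
    ∃ co : Fin 2 → ℚ, (monomial u r : S) - ∑ t, C (co t) * Bas2 t ∈ Ig := by
  intro u hu r
  obtain ⟨c1, c2, hc⟩ := red2 (u 0) (u 1) (u 2) hu
  refine ⟨![r*c1, r*c2], ?_⟩
  rw [Fin.sum_univ_two]
  rw [mono_eq u r]
  have e : C r * M3 (u 0) (u 1) (u 2) - (C (![r*c1, r*c2] 0) * Bas2 0 + C (![r*c1, r*c2] 1) * Bas2 1)
      = C r * (M3 (u 0) (u 1) (u 2) - (C c1 * Bas2 0 + C c2 * Bas2 1)) := by
    show C r * M3 (u 0) (u 1) (u 2) - (C (r*c1) * Bas2 0 + C (r*c2) * Bas2 1) = _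
    simp only [C_mul]; ring
  rw [e]
  exact Ideal.mul_mem_left _ _ hc

lemma hspan2 : ∀ p : S, IsWeightedHomogeneous W p 2 →
    ∃ co : Fin 2 → ℚ, p - ∑ t, C (co t) * Bas2 t ∈ Ig :=
  span_gen Bas2 hred2

lemma pairF2 : ∀ co : Fin 2 → ℚ,
    (∀ s : Fin 2, (∑ t, C (co t) * Bas2 t) * Bas5 s ∈ Ig) → ∀ t, co t = 0 := by
  intro co hs
  have h1 := hs 0
  have h2 := hs 1
  simp only [Fin.sum_univ_two] at h1 h2
  have hz := pair2 (co 0) (co 1) h1 h2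
  intro t
  fin_cases t
  · exact hz.1
  · exact hz.2

lemma hred3 : ∀ u : Fin 3 →₀ ℕ, u 0 + 2 * u 1 + 3 * u 2 = 3 → ∀ r : ℚ,
    ∃ co : Fin 3 → ℚ, (monomial u r : S) - ∑ t, C (co t) * Bas3 t ∈ Ig := by
  intro u hu r
  obtain ⟨c1, c2, c3, hc⟩ := red3 (u 0) (u 1) (u 2) hu
  refine ⟨![r*c1, r*c2, r*c3], ?_⟩
  rw [Fin.sum_univ_three]
  rw [mono_eq u r]
  have e : C r * M3 (u 0) (u 1) (u 2) - (C (![r*c1, r*c2, r*c3] 0) * Bas3 0 + C (![r*c1, r*c2, r*c3] 1) * Bas3 1 + C (![r*c1, r*c2, r*c3] 2) * Bas3 2)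
      = C r * (M3 (u 0) (u 1) (u 2) - (C c1 * Bas3 0 + C c2 * Bas3 1 + C c3 * Bas3 2)) := by
    show C r * M3 (u 0) (u 1) (u 2) - (C (r*c1) * Bas3 0 + C (r*c2) * Bas3 1 + C (r*c3) * Bas3 2) = _
    simp only [C_mul]; ring
  rw [e]
  exact Ideal.mul_mem_left _ _ hc

lemma hspan3 : ∀ p : S, IsWeightedHomogeneous W p 3 →
    ∃ co : Fin 3 → ℚ, p - ∑ t, C (co t) * Bas3 t ∈ Ig :=
  span_gen Bas3 hred3

lemma pairF3 : ∀ co : Fin 3 → ℚ,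
    (∀ s : Fin 3, (∑ t, C (co t) * Bas3 t) * Bas4 s ∈ Ig) → ∀ t, co t = 0 := by
  intro co hs
  have h1 := hs 0
  have h2 := hs 1
  have h3 := hs 2
  simp only [Fin.sum_univ_three] at h1 h2 h3
  have hz := pair3 (co 0) (co 1) (co 2) h1 h2 h3
  intro t
  fin_cases t
  · exact hz.1
  · exact hz.2.1
  · exact hz.2.2

lemma hred4 : ∀ u : Fin 3 →₀ ℕ, u 0 + 2 * u 1 + 3 * u 2 = 4 → ∀ r : ℚ,
    ∃ co : Fin 3 → ℚ, (monomial u r : S) - ∑ t, C (co t) * Bas4 t ∈ Ig := by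
  intro u hu r
  obtain ⟨c1, c2, c3, hc⟩ := red4 (u 0) (u 1) (u 2) hu
  refine ⟨![r*c1, r*c2, r*c3], ?_⟩
  rw [Fin.sum_univ_three]
  rw [mono_eq u r]
  have e : C r * M3 (u 0) (u 1) (u 2) - (C (![r*c1, r*c2, r*c3] 0) * Bas4 0 + C (![r*c1, r*c2, r*c3] 1) * Bas4 1 + C (![r*c1, r*c2, r*c3] 2) * Bas4 2)
      = C r * (M3 (u 0) (u 1) (u 2) - (C c1 * Bas4 0 + C c2 * Bas4 1 + C c3 * Bas4 2)) := by
    show C r * M3 (u 0) (u 1) (u 2) - (C (r*c1) * Bas4 0 + C (r*c2) * Bas4 1 + C (r*c3) * Bas4 2) = _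
    simp only [C_mul]; ring
  rw [e]
  exact Ideal.mul_mem_left _ _ hc

lemma hspan4 : ∀ p : S, IsWeightedHomogeneous W p 4 →
    ∃ co : Fin 3 → ℚ, p - ∑ t, C (co t) * Bas4 t ∈ Ig :=
  span_gen Bas4 hred4

lemma pairF4 : ∀ co : Fin 3 → ℚ,
    (∀ s : Fin 3, (∑ t, C (co t) * Bas4 t) * Bas3 s ∈ Ig) → ∀ t, co t = 0 := by
  intro co hs
  have h1 := hs 0
  have h2 := hs 1
  have h3 := hs 2
  simp only [Fin.sum_univ_three] at h1 h2 h3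
  have hz := pair4 (co 0) (co 1) (co 2) h1 h2 h3
  intro t
  fin_cases t
  · exact hz.1
  · exact hz.2.1
  · exact hz.2.2

lemma hred5 : ∀ u : Fin 3 →₀ ℕ, u 0 + 2 * u 1 + 3 * u 2 = 5 → ∀ r : ℚ,
    ∃ co : Fin 2 → ℚ, (monomial u r : S) - ∑ t, C (co t) * Bas5 t ∈ Ig := by
  intro u hu r
  obtain ⟨c1, c2, hc⟩ := red5 (u 0) (u 1) (u 2) hu
  refine ⟨![r*c1, r*c2], ?_⟩
  rw [Fin.sum_univ_two]
  rw [mono_eq u r]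
  have e : C r * M3 (u 0) (u 1) (u 2) - (C (![r*c1, r*c2] 0) * Bas5 0 + C (![r*c1, r*c2] 1) * Bas5 1)
      = C r * (M3 (u 0) (u 1) (u 2) - (C c1 * Bas5 0 + C c2 * Bas5 1)) := by
    show C r * M3 (u 0) (u 1) (u 2) - (C (r*c1) * Bas5 0 + C (r*c2) * Bas5 1) = _
    simp only [C_mul]; ring
  rw [e]
  exact Ideal.mul_mem_left _ _ hc

lemma hspan5 : ∀ p : S, IsWeightedHomogeneous W p 5 →
    ∃ co : Fin 2 → ℚ, p - ∑ t, C (co t) * Bas5 t ∈ Ig :=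
  span_gen Bas5 hred5

lemma pairF5 : ∀ co : Fin 2 → ℚ,
    (∀ s : Fin 2, (∑ t, C (co t) * Bas5 t) * Bas2 s ∈ Ig) → ∀ t, co t = 0 := by
  intro co hs
  have h1 := hs 0
  have h2 := hs 1
  simp only [Fin.sum_univ_two] at h1 h2
  have hz := pair5 (co 0) (co 1) h1 h2
  intro t
  fin_cases t
  · exact hz.1
  · exact hz.2

lemma hred6 : ∀ u : Fin 3 →₀ ℕ, u 0 + 2 * u 1 + 3 * u 2 = 6 → ∀ r : ℚ,
    ∃ co : Fin 1 → ℚ, (monomial u r : S) - ∑ t, C (co t) * Bas6 t ∈ Ig := by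
  intro u hu r
  obtain ⟨c1, hc⟩ := red6 (u 0) (u 1) (u 2) hu
  refine ⟨![r*c1], ?_⟩
  rw [Fin.sum_univ_one]
  rw [mono_eq u r]
  have e : C r * M3 (u 0) (u 1) (u 2) - (C (![r*c1] 0) * Bas6 0)
      = C r * (M3 (u 0) (u 1) (u 2) - (C c1 * Bas6 0)) := by
    show C r * M3 (u 0) (u 1) (u 2) - (C (r*c1) * Bas6 0) = _
    simp only [C_mul]; ring
  rw [e]
  exact Ideal.mul_mem_left _ _ hc

lemma hspan6 : ∀ p : S, IsWeightedHomogeneous W p 6 →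
    ∃ co : Fin 1 → ℚ, p - ∑ t, C (co t) * Bas6 t ∈ Ig :=
  span_gen Bas6 hred6

lemma pairF6 : ∀ co : Fin 1 → ℚ,
    (∀ s : Fin 1, (∑ t, C (co t) * Bas6 t) * Bas1 s ∈ Ig) → ∀ t, co t = 0 := by
  intro co hs
  have h1 := hs 0
  simp only [Fin.sum_univ_one] at h1
  have hz := pair6 (co 0) h1
  intro t
  fin_cases t
  · exact hz

lemma hred7 : ∀ u : Fin 3 →₀ ℕ, u 0 + 2 * u 1 + 3 * u 2 = 7 → ∀ r : ℚ,
    ∃ co : Fin 1 → ℚ, (monomial u r : S) - ∑ t, C (co t) * Bas7 t ∈ Ig := by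
  intro u hu r
  obtain ⟨c1, hc⟩ := red7 (u 0) (u 1) (u 2) hu
  refine ⟨![r*c1], ?_⟩
  rw [Fin.sum_univ_one]
  rw [mono_eq u r]
  have e : C r * M3 (u 0) (u 1) (u 2) - (C (![r*c1] 0) * Bas7 0)
      = C r * (M3 (u 0) (u 1) (u 2) - (C c1 * Bas7 0)) := by
    show C r * M3 (u 0) (u 1) (u 2) - (C (r*c1) * Bas7 0) = _
    simp only [C_mul]; ring
  rw [e]
  exact Ideal.mul_mem_left _ _ hc

lemma hspan7 : ∀ p : S, IsWeightedHomogeneous W p 7 →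
    ∃ co : Fin 1 → ℚ, p - ∑ t, C (co t) * Bas7 t ∈ Ig :=
  span_gen Bas7 hred7

lemma pairF7 : ∀ co : Fin 1 → ℚ,
    (∀ s : Fin 1, (∑ t, C (co t) * Bas7 t) * Bas0 s ∈ Ig) → ∀ t, co t = 0 := by
  intro co hs
  have h1 := hs 0
  simp only [Fin.sum_univ_one] at h1
  have hz := pair7 (co 0) h1
  intro t
  fin_cases t
  · exact hz

def mkA : S →ₐ[ℚ] (S ⧸ Ig) := Ideal.Quotient.mkₐ ℚ Ig

def AgrD : ℕ → Submodule ℚ (S ⧸ Ig) := fun j =>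
  Submodule.map mkA.toLinearMap (weightedHomogeneousSubmodule ℚ W j)

lemma mkA_zero_iff (p : S) : mkA p = 0 ↔ p ∈ Ig := by
  rw [show mkA p = Ideal.Quotient.mk Ig p from rfl, Ideal.Quotient.eq_zero_iff_mem]

lemma mkA_C_mul (q : ℚ) (p : S) : mkA (C q * p) = q • mkA p := by
  rw [← MvPolynomial.smul_eq_C_mul, map_smul]

lemma agr_span {j k : ℕ} (Bs : Fin k → S)
    (hBs : ∀ t, IsWeightedHomogeneous W (Bs t) j)
    (hspan : ∀ p : S, IsWeightedHomogeneous W p j →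
      ∃ co : Fin k → ℚ, p - ∑ t, C (co t) * Bs t ∈ Ig) :
    AgrD j = Submodule.span ℚ (Set.range fun t => mkA (Bs t)) := by
  apply le_antisymm
  · rintro a ⟨p, hp, rfl⟩
    obtain ⟨co, hco⟩ := hspan p hp
    have h1 : mkA (p - ∑ t, C (co t) * Bs t) = 0 := (mkA_zero_iff _).mpr hco
    rw [map_sub, sub_eq_zero] at h1
    have h0 : mkA.toLinearMap p = ∑ t, co t • mkA (Bs t) := by
      show mkA p = _
      rw [h1, map_sum]
      exact Finset.sum_congr rfl fun t _ => mkA_C_mul _ _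
    rw [h0]
    exact Submodule.sum_mem _ fun t _ =>
      Submodule.smul_mem _ _ (Submodule.subset_span ⟨t, rfl⟩)
  · rw [Submodule.span_le]
    rintro _ ⟨t, rfl⟩
    exact ⟨Bs t, hBs t, rfl⟩

lemma agr_li {k : ℕ} (Bs : Fin k → S)
    (hpair : ∀ co : Fin k → ℚ, (∑ t, C (co t) * Bs t) ∈ Ig → ∀ t, co t = 0) :
    LinearIndependent ℚ (fun t => mkA (Bs t)) := by
  rw [Fintype.linearIndependent_iff]
  intro gc hg
  apply hpair
  have h1 : mkA (∑ t, C (gc t) * Bs t) = 0 := by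
    rw [map_sum,
      show ∑ t, mkA (C (gc t) * Bs t) = ∑ t, gc t • mkA (Bs t) from
        Finset.sum_congr rfl fun t _ => mkA_C_mul _ _]
    exact hg
  rwa [mkA_zero_iff] at h1

lemma agr_rank {j k : ℕ} (Bs : Fin k → S)
    (hBs : ∀ t, IsWeightedHomogeneous W (Bs t) j)
    (hspan : ∀ p : S, IsWeightedHomogeneous W p j →
      ∃ co : Fin k → ℚ, p - ∑ t, C (co t) * Bs t ∈ Ig)
    (hpair : ∀ co : Fin k → ℚ, (∑ t, C (co t) * Bs t) ∈ Ig → ∀ t, co t = 0) :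
    Module.finrank ℚ (AgrD j) = k := by
  rw [agr_span Bs hBs hspan, finrank_span_eq_card (agr_li Bs hpair), Fintype.card_fin]

lemma high_mem {p : S} {n : ℕ} (hp : IsWeightedHomogeneous W p n) (hn : 7 < n) : p ∈ Ig := by
  rw [← support_sum_monomial_coeff p]
  refine Submodule.sum_mem _ fun u hu => ?_
  rw [mono_eq u _]
  apply Ideal.mul_mem_left
  apply memI_high (u 0 + u 1 + u 2) _ _ _ le_rfl
  have h1 := hp (mem_support_iff.mp hu); rw [wt_eq] at h1; omega

lemma agr_bot {j : ℕ} (hj : 7 < j) : AgrD j = ⊥ := by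
  rw [eq_bot_iff]
  rintro a ⟨p, hp, rfl⟩
  simp only [Submodule.mem_bot]
  show mkA p = 0
  rw [mkA_zero_iff]
  exact high_mem hp hj

lemma agr_pair {i k : ℕ} (Bs Ds : Fin k → S)
    (hDs : ∀ s, IsWeightedHomogeneous W (Ds s) (7 - i))
    (hspan : ∀ p : S, IsWeightedHomogeneous W p i →
      ∃ co : Fin k → ℚ, p - ∑ t, C (co t) * Bs t ∈ Ig)
    (hpairF : ∀ co : Fin k → ℚ,
      (∀ s, (∑ t, C (co t) * Bs t) * Ds s ∈ Ig) → ∀ t, co t = 0) :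
    ∀ a ∈ AgrD i, (∀ b ∈ AgrD (7 - i), a * b = 0) → a = 0 := by
  rintro a ⟨p, hp, rfl⟩ h
  obtain ⟨co, hco⟩ := hspan p hp
  have hps : ∀ s, p * Ds s ∈ Ig := by
    intro s
    have hb : mkA (Ds s) ∈ AgrD (7 - i) := ⟨Ds s, hDs s, rfl⟩
    have h2 := h _ hb
    have h3 : mkA (p * Ds s) = 0 := by
      rw [map_mul]; exact h2
    rwa [mkA_zero_iff] at h3
  have hz := hpairF co (fun s => by
    have e : (∑ t, C (co t) * Bs t) * Ds s
        = p * Ds s - (p - ∑ t, C (co t) * Bs t) * Ds s := by ring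
    rw [e]; exact sub_mem (hps s) (Ideal.mul_mem_right _ _ hco))
  have hsum : (∑ t, C (co t) * Bs t) = 0 :=
    Finset.sum_eq_zero fun t _ => by rw [hz t, map_zero, zero_mul]
  rw [hsum, sub_zero] at hco
  show mkA p = 0
  rw [mkA_zero_iff]
  exact hco

end
end GenusNine

open GenusNine in
/-- Faber's presentation of the tautological ring `R^*(M_9)` (`x = κ₁`, `y = κ₂`,
`z = κ₃`, with `deg x = 1`, `deg y = 2`, `deg z = 3`): the quotient has Hilbert
function `1,1,2,3,3,2,1,1`, vanishes above degree 7, and is Gorenstein with socle in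
degree 7: the pairing `A_i × A_{7-i} → A_7 ≅ ℚ` is perfect for all `0 ≤ i ≤ 7`. -/
theorem genus_nine_tautological_ring_gorenstein :
    let S := MvPolynomial (Fin 3) ℚ
    let x : S := X 0
    let y : S := X 1
    let z : S := X 2
    let I : Ideal S := Ideal.span
      ({5195 * x ^ 4 + 3644694 * x * z + 749412 * y ^ 2 - 265788 * x ^ 2 * y,
        33859814400 * y * z - 95311440 * x ^ 3 * y + 2288539 * x ^ 5,
        19151377 * x ^ 5 + 16929907200 * x * y ^ 2 - 1142345520 * x ^ 3 * y,
        1422489600 * z ^ 2 - 983 * x ^ 6,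
        1185408000 * y ^ 3 - 47543 * x ^ 6} : Set S)
    let w : Fin 3 → ℕ := ![1, 2, 3]
    let Agr : ℕ → Submodule ℚ (S ⧸ I) := fun j =>
      Submodule.map (Ideal.Quotient.mkₐ ℚ I).toLinearMap (weightedHomogeneousSubmodule ℚ w j)
    (Module.finrank ℚ (Agr 0) = 1 ∧ Module.finrank ℚ (Agr 1) = 1 ∧
      Module.finrank ℚ (Agr 2) = 2 ∧ Module.finrank ℚ (Agr 3) = 3 ∧
      Module.finrank ℚ (Agr 4) = 3 ∧ Module.finrank ℚ (Agr 5) = 2 ∧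
      Module.finrank ℚ (Agr 6) = 1 ∧ Module.finrank ℚ (Agr 7) = 1) ∧
    (∀ j : ℕ, 7 < j → Agr j = ⊥) ∧
    (∀ i : ℕ, i ≤ 7 → ∀ a ∈ Agr i, (∀ b ∈ Agr (7 - i), a * b = 0) → a = 0) := by
  intro S x y z I w Agr
  have hI : I = Ig := rfl
  have hAgr : ∀ j, Agr j = AgrD j := fun j => rfl
  refine ⟨⟨?_, ?_, ?_, ?_, ?_, ?_, ?_, ?_⟩, ?_, ?_⟩
  · rw [hAgr]; exact agr_rank Bas0 hBas0 hspan0 (fun co h t => pairF0 co (fun s => Ideal.mul_mem_right _ _ h) t)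
  · rw [hAgr]; exact agr_rank Bas1 hBas1 hspan1 (fun co h t => pairF1 co (fun s => Ideal.mul_mem_right _ _ h) t)
  · rw [hAgr]; exact agr_rank Bas2 hBas2 hspan2 (fun co h t => pairF2 co (fun s => Ideal.mul_mem_right _ _ h) t)
  · rw [hAgr]; exact agr_rank Bas3 hBas3 hspan3 (fun co h t => pairF3 co (fun s => Ideal.mul_mem_right _ _ h) t)
  · rw [hAgr]; exact agr_rank Bas4 hBas4 hspan4 (fun co h t => pairF4 co (fun s => Ideal.mul_mem_right _ _ h) t)
  · rw [hAgr]; exact agr_rank Bas5 hBas5 hspan5 (fun co h t => pairF5 co (fun s => Ideal.mul_mem_right _ _ h) t)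
  · rw [hAgr]; exact agr_rank Bas6 hBas6 hspan6 (fun co h t => pairF6 co (fun s => Ideal.mul_mem_right _ _ h) t)
  · rw [hAgr]; exact agr_rank Bas7 hBas7 hspan7 (fun co h t => pairF7 co (fun s => Ideal.mul_mem_right _ _ h) t)
  · intro j hj; rw [hAgr]; exact agr_bot hj
  · intro i hi
    interval_cases i
    · exact agr_pair Bas0 Bas7 hBas7 hspan0 pairF0
    · exact agr_pair Bas1 Bas6 hBas6 hspan1 pairF1
    · exact agr_pair Bas2 Bas5 hBas5 hspan2 pairF2
    · exact agr_pair Bas3 Bas4 hBas4 hspan3 pairF3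
    · exact agr_pair Bas4 Bas3 hBas3 hspan4 pairF4
    · exact agr_pair Bas5 Bas2 hBas2 hspan5 pairF5
    · exact agr_pair Bas6 Bas1 hBas1 hspan6 pairF6
    · exact agr_pair Bas7 Bas0 hBas0 hspan7 pairF7
end

section
/- In the polynomial ring ℚ[K_1, ..., K_d, (D_{ij})_{1≤i<j≤d}], consider the rewriting rules D_{id}D_{jd} → D_{ij}D_{id} (for i < j < d), D_{id}^2 → −K_i D_{id} (for i < d), and K_d D_{id} → K_i D_{id} (for i < d). Then every monomial in the K_i (1 ≤ i ≤ d) and D_{ij} (1 ≤ i < j ≤ d) that involves at least one variable with index d (i.e. K_d or some D_{id}) can be rewritten, by finitely many applications of these rules, into the form ± M · D_{id} for some i < d, or M · K_d^k for some k ≥ 1, where M is a monomial in the variables K_1, ..., K_{d-1}, D_{ij} (1 ≤ i < j ≤ d−1) not involving index d. -/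
open MvPolynomial

/-- The tautological divisor classes on the fibre product `C_g^{d+1}`:
`K i` for each point `i` and a diagonal class `D i j` (used with `i < j`). -/
inductive JetVar (d : ℕ) : Type
  | K : Fin (d + 1) → JetVar d
  | D : Fin (d + 1) → Fin (d + 1) → JetVar d
  deriving DecidableEq

/-- A variable "involves the last index". -/
def JetVar.usesLast {d : ℕ} : JetVar d → Prop
  | .K i => i = Fin.last d
  | .D i j => i = Fin.last d ∨ j = Fin.last d

/-- A variable is legal: diagonals `D i j` are only used with `i < j`. -/
def JetVar.legal {d : ℕ} : JetVar d → Prop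
  | .K _ => True
  | .D i j => i < j

/-- One application of a substitution rule of the Formularium, in a multiplicative
context `m`: `D_{id}D_{jd} → D_{ij}D_{id}` (`i < j < d`); `D_{id}² → −K_i D_{id}`
(`i < d`); `K_d D_{id} → K_i D_{id}` (`i < d`). -/
inductive FormStep (d : ℕ) :
    MvPolynomial (JetVar d) ℚ → MvPolynomial (JetVar d) ℚ → Prop
  | diag (i j : Fin (d + 1)) (hij : i < j) (hj : j < Fin.last d)
      (m : MvPolynomial (JetVar d) ℚ) :
      FormStep d (m * X (.D i (Fin.last d)) * X (.D j (Fin.last d)))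
        (m * X (.D i j) * X (.D i (Fin.last d)))
  | sq (i : Fin (d + 1)) (hi : i < Fin.last d) (m : MvPolynomial (JetVar d) ℚ) :
      FormStep d (m * X (.D i (Fin.last d)) ^ 2)
        (-(m * X (.K i) * X (.D i (Fin.last d))))
  | kd (i : Fin (d + 1)) (hi : i < Fin.last d) (m : MvPolynomial (JetVar d) ℚ) :
      FormStep d (m * X (.K (Fin.last d)) * X (.D i (Fin.last d)))
        (m * X (.K i) * X (.D i (Fin.last d)))

namespace JetAux

variable {d : ℕ}

/-- total multiplicity of diagonal variables with second index `last`. -/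
def Ecount (d : ℕ) (u : JetVar d →₀ ℕ) : ℕ :=
  ∑ i : Fin (d + 1), u (JetVar.D i (Fin.last d))

lemma Ecount_add (u v : JetVar d →₀ ℕ) :
    Ecount d (u + v) = Ecount d u + Ecount d v := by
  simp [Ecount, Finset.sum_add_distrib]

lemma Ecount_single_D_last (i : Fin (d + 1)) (n : ℕ) :
    Ecount d (Finsupp.single (JetVar.D i (Fin.last d)) n) = n := by
  simp [Ecount, Finsupp.single_apply]

lemma Ecount_single_K (i : Fin (d + 1)) (n : ℕ) :
    Ecount d (Finsupp.single (JetVar.K i) n) = 0 := by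
  simp [Ecount, Finsupp.single_apply]

lemma Ecount_single_D_ne (a b : Fin (d + 1)) (hb : b ≠ Fin.last d) (n : ℕ) :
    Ecount d (Finsupp.single (JetVar.D a b) n) = 0 := by
  simp [Ecount, Finsupp.single_apply, hb]

lemma exists_of_Ecount_pos {u : JetVar d →₀ ℕ} (h : 1 ≤ Ecount d u) :
    ∃ i, 1 ≤ u (JetVar.D i (Fin.last d)) := by
  by_contra hc
  push_neg at hc
  have : Ecount d u = 0 := Finset.sum_eq_zero fun i _ => by have := hc i; omega
  omega

lemma term_le_Ecount (u : JetVar d →₀ ℕ) (i : Fin (d + 1)) :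
    u (JetVar.D i (Fin.last d)) ≤ Ecount d u := by
  exact Finset.single_le_sum (f := fun j => u (JetVar.D j (Fin.last d)))
    (fun _ _ => Nat.zero_le _) (Finset.mem_univ i)

lemma mono_mul_X (u : JetVar d →₀ ℕ) (a : JetVar d) :
    monomial (u + Finsupp.single a 1) (1 : ℚ) = monomial u 1 * X a := by
  rw [monomial_add_single, pow_one]


lemma formStep_neg {p q : MvPolynomial (JetVar d) ℚ} (h : FormStep d p q) :
    FormStep d (-p) (-q) := by
  cases h with
  | diag i j hij hj m =>
      have := FormStep.diag i j hij hj (-m)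
      simpa [neg_mul] using this
  | sq i hi m =>
      have := FormStep.sq i hi (-m)
      simpa [neg_mul, neg_neg] using this
  | kd i hi m =>
      have := FormStep.kd i hi (-m)
      simpa [neg_mul] using this

lemma rtg_neg {p q : MvPolynomial (JetVar d) ℚ}
    (h : Relation.ReflTransGen (FormStep d) p q) :
    Relation.ReflTransGen (FormStep d) (-p) (-q) := by
  induction h with
  | refl => exact .refl
  | tail _ hstep ih => exact ih.tail (formStep_neg hstep)

lemma step_kd_mono (c : JetVar d →₀ ℕ) (i : Fin (d + 1)) (hi : i < Fin.last d) :
    FormStep d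
      (monomial (c + Finsupp.single (JetVar.K (Fin.last d)) 1
          + Finsupp.single (JetVar.D i (Fin.last d)) 1) (1 : ℚ))
      (monomial (c + Finsupp.single (JetVar.K i) 1
          + Finsupp.single (JetVar.D i (Fin.last d)) 1) (1 : ℚ)) := by
  rw [mono_mul_X, mono_mul_X, mono_mul_X, mono_mul_X]
  exact FormStep.kd i hi (monomial c 1)

lemma step_diag_mono (c : JetVar d →₀ ℕ) (a b : Fin (d + 1)) (hab : a < b)
    (hb : b < Fin.last d) :
    FormStep d
      (monomial (c + Finsupp.single (JetVar.D a (Fin.last d)) 1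
          + Finsupp.single (JetVar.D b (Fin.last d)) 1) (1 : ℚ))
      (monomial (c + Finsupp.single (JetVar.D a b) 1
          + Finsupp.single (JetVar.D a (Fin.last d)) 1) (1 : ℚ)) := by
  rw [mono_mul_X, mono_mul_X, mono_mul_X, mono_mul_X]
  exact FormStep.diag a b hab hb (monomial c 1)

lemma step_sq_mono (c : JetVar d →₀ ℕ) (i : Fin (d + 1)) (hi : i < Fin.last d) :
    FormStep d
      (monomial (c + Finsupp.single (JetVar.D i (Fin.last d)) 2) (1 : ℚ))
      (-(monomial (c + Finsupp.single (JetVar.K i) 1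
          + Finsupp.single (JetVar.D i (Fin.last d)) 1) (1 : ℚ))) := by
  rw [monomial_add_single, mono_mul_X, mono_mul_X]
  exact FormStep.sq i hi (monomial c 1)

lemma decomp2 (u : JetVar d →₀ ℕ) (a b : JetVar d) (hab : a ≠ b)
    (ha : 1 ≤ u a) (hb : 1 ≤ u b) :
    u = (u - Finsupp.single a 1 - Finsupp.single b 1)
        + Finsupp.single a 1 + Finsupp.single b 1 := by
  ext x
  simp only [Finsupp.add_apply, Finsupp.tsub_apply, Finsupp.single_apply]
  by_cases h1 : a = x
  · subst h1
    rw [if_pos rfl, if_neg (fun h => hab h.symm)]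
    omega
  · by_cases h2 : b = x
    · subst h2
      rw [if_neg h1, if_pos rfl]
      omega
    · rw [if_neg h1, if_neg h2]
      omega

lemma decomp_sq (u : JetVar d →₀ ℕ) (a : JetVar d) (ha : 2 ≤ u a) :
    u = (u - Finsupp.single a 2) + Finsupp.single a 2 := by
  ext x
  simp only [Finsupp.add_apply, Finsupp.tsub_apply, Finsupp.single_apply]
  by_cases h1 : a = x
  · subst h1; rw [if_pos rfl]; omega
  · rw [if_neg h1]; omega

lemma decomp1 (u : JetVar d →₀ ℕ) (a : JetVar d) (n : ℕ) (ha : n ≤ u a) :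
    u = (u - Finsupp.single a n) + Finsupp.single a n := by
  ext x
  simp only [Finsupp.add_apply, Finsupp.tsub_apply, Finsupp.single_apply]
  by_cases h1 : a = x
  · subst h1; rw [if_pos rfl]; omega
  · rw [if_neg h1]; omega

lemma legal_add3 (c : JetVar d →₀ ℕ) (a b : JetVar d)
    (hc : ∀ x ∈ c.support, x.legal) (ha : a.legal) (hb : b.legal) :
    ∀ x ∈ (c + Finsupp.single a 1 + Finsupp.single b 1).support, x.legal := by
  intro x hx
  have h1 := Finsupp.support_add hx
  rcases Finset.mem_union.1 h1 with h2 | h2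
  · have h3 := Finsupp.support_add h2
    rcases Finset.mem_union.1 h3 with h4 | h4
    · exact hc x h4
    · have := Finsupp.support_single_subset h4
      simp only [Finset.mem_singleton] at this
      subst this; exact ha
  · have := Finsupp.support_single_subset h2
    simp only [Finset.mem_singleton] at this
    subst this; exact hb

lemma not_usesLast_of (w : JetVar d →₀ ℕ)
    (hleg : ∀ x ∈ w.support, x.legal)
    (hK : w (JetVar.K (Fin.last d)) = 0)
    (hD : ∀ i, w (JetVar.D i (Fin.last d)) = 0) :
    ∀ x ∈ w.support, x.legal ∧ ¬ x.usesLast := by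
  intro x hx
  refine ⟨hleg x hx, ?_⟩
  intro hul
  cases x with
  | K i =>
      simp only [JetVar.usesLast] at hul
      subst hul
      exact (Finsupp.mem_support_iff.1 hx) hK
  | D a b =>
      have hlg := hleg _ hx
      simp only [JetVar.legal] at hlg
      simp only [JetVar.usesLast] at hul
      rcases hul with h | h
      · subst h
        exact absurd hlg (not_lt.2 (Fin.le_last b))
      · subst h
        exact (Finsupp.mem_support_iff.1 hx) (hD a)


lemma erase_sum_split (u : JetVar d →₀ ℕ) (i : Fin (d + 1)) :
    u (JetVar.D i (Fin.last d))
      + ∑ j ∈ Finset.univ.erase i, u (JetVar.D j (Fin.last d)) = Ecount d u :=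
  Finset.add_sum_erase _ (fun j => u (JetVar.D j (Fin.last d))) (Finset.mem_univ i)

lemma main_red (d : ℕ) :
    ∀ n (u : JetVar d →₀ ℕ),
      u (JetVar.K (Fin.last d)) + Ecount d u = n →
      (∀ x ∈ u.support, x.legal) → 1 ≤ Ecount d u →
      ∃ w : JetVar d →₀ ℕ, (∀ x ∈ w.support, x.legal ∧ ¬ x.usesLast) ∧
        ∃ i : Fin (d + 1), i < Fin.last d ∧
          (Relation.ReflTransGen (FormStep d) (monomial u (1 : ℚ))
              (monomial w 1 * X (.D i (Fin.last d))) ∨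
           Relation.ReflTransGen (FormStep d) (monomial u (1 : ℚ))
              (-(monomial w 1 * X (.D i (Fin.last d))))) := by
  intro n
  induction n using Nat.strong_induction_on with
  | _ n IH =>
  intro u hn hleg hE
  obtain ⟨i, hi1⟩ := exists_of_Ecount_pos hE
  have hisup : JetVar.D i (Fin.last d) ∈ u.support :=
    Finsupp.mem_support_iff.2 (by omega)
  have hilt : i < Fin.last d := hleg _ hisup
  have hine : i ≠ Fin.last d := ne_of_lt hilt
  by_cases hk : 1 ≤ u (JetVar.K (Fin.last d))
  · -- use the `kd` rule
    have hne : JetVar.K (Fin.last d) ≠ JetVar.D i (Fin.last d) := by simp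
    have hu := decomp2 u (JetVar.K (Fin.last d)) (JetVar.D i (Fin.last d)) hne hk hi1
    set c := u - Finsupp.single (JetVar.K (Fin.last d)) 1
        - Finsupp.single (JetVar.D i (Fin.last d)) 1 with hcdef
    set u' := c + Finsupp.single (JetVar.K i) 1
        + Finsupp.single (JetVar.D i (Fin.last d)) 1 with hu'def
    have hstep : FormStep d (monomial u 1) (monomial u' 1) := by
      rw [hu, hu'def]
      exact step_kd_mono c i hilt
    have hcleg : ∀ x ∈ c.support, x.legal := fun x hx =>
      hleg x (Finsupp.support_tsub (Finsupp.support_tsub hx))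
    have hu'leg : ∀ x ∈ u'.support, x.legal := by
      rw [hu'def]
      exact legal_add3 c _ _ hcleg trivial hilt
    have h1 : u (JetVar.K (Fin.last d)) = c (JetVar.K (Fin.last d)) + 1 := by
      rw [hu]
      simp [Finsupp.single_apply]
    have h2 : u' (JetVar.K (Fin.last d)) = c (JetVar.K (Fin.last d)) := by
      rw [hu'def]
      simp [Finsupp.single_apply, hine]
    have h3 : Ecount d u = Ecount d c + 1 := by
      rw [hu, Ecount_add, Ecount_add, Ecount_single_K, Ecount_single_D_last]
    have h4 : Ecount d u' = Ecount d c + 1 := by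
      rw [hu'def, Ecount_add, Ecount_add, Ecount_single_K, Ecount_single_D_last]
    obtain ⟨w, hw, j, hj, hch⟩ := IH (n - 1) (by omega) u' (by omega) hu'leg (by omega)
    refine ⟨w, hw, j, hj, ?_⟩
    rcases hch with h | h
    · exact Or.inl (Relation.ReflTransGen.head hstep h)
    · exact Or.inr (Relation.ReflTransGen.head hstep h)
  · have hk0 : u (JetVar.K (Fin.last d)) = 0 := by omega
    by_cases hsq : 2 ≤ u (JetVar.D i (Fin.last d))
    · -- use the `sq` rule
      have hu := decomp_sq u (JetVar.D i (Fin.last d)) hsq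
      set c := u - Finsupp.single (JetVar.D i (Fin.last d)) 2 with hcdef
      set u' := c + Finsupp.single (JetVar.K i) 1
          + Finsupp.single (JetVar.D i (Fin.last d)) 1 with hu'def
      have hstep : FormStep d (monomial u 1) (-(monomial u' 1)) := by
        rw [hu, hu'def]
        exact step_sq_mono c i hilt
      have hcleg : ∀ x ∈ c.support, x.legal := fun x hx =>
        hleg x (Finsupp.support_tsub hx)
      have hu'leg : ∀ x ∈ u'.support, x.legal := by
        rw [hu'def]
        exact legal_add3 c _ _ hcleg trivial hilt
      have h1 : u (JetVar.K (Fin.last d)) = c (JetVar.K (Fin.last d)) := by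
        rw [hu]
        simp [Finsupp.single_apply]
      have h2 : u' (JetVar.K (Fin.last d)) = c (JetVar.K (Fin.last d)) := by
        rw [hu'def]
        simp [Finsupp.single_apply, hine]
      have h3 : Ecount d u = Ecount d c + 2 := by
        rw [hu, Ecount_add, Ecount_single_D_last]
      have h4 : Ecount d u' = Ecount d c + 1 := by
        rw [hu'def, Ecount_add, Ecount_add, Ecount_single_K, Ecount_single_D_last]
      obtain ⟨w, hw, j, hj, hch⟩ := IH (n - 1) (by omega) u' (by omega) hu'leg (by omega)
      refine ⟨w, hw, j, hj, ?_⟩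
      rcases hch with h | h
      · exact Or.inr (Relation.ReflTransGen.head hstep (rtg_neg h))
      · refine Or.inl ?_
        have h' := rtg_neg h
        rw [neg_neg] at h'
        exact Relation.ReflTransGen.head hstep h'
    · by_cases hE2 : 2 ≤ Ecount d u
      · -- use the `diag` rule
        have hsplit := erase_sum_split u i
        have : 1 ≤ ∑ j ∈ Finset.univ.erase i, u (JetVar.D j (Fin.last d)) := by omega
        have hex : ∃ j ∈ Finset.univ.erase i, 1 ≤ u (JetVar.D j (Fin.last d)) := by
          by_contra hc
          push_neg at hc
          have h0 : ∑ j ∈ Finset.univ.erase i, u (JetVar.D j (Fin.last d)) = 0 :=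
            Finset.sum_eq_zero fun j hj => by have := hc j hj; omega
          omega
        obtain ⟨j, hjmem, hj1⟩ := hex
        have hji : j ≠ i := (Finset.mem_erase.1 hjmem).1
        have hjlt : j < Fin.last d := by
          have : JetVar.D j (Fin.last d) ∈ u.support :=
            Finsupp.mem_support_iff.2 (by omega)
          exact hleg _ this
        obtain ⟨a, b, hab, ha1, hb1, hblt⟩ :
            ∃ a b : Fin (d + 1), a < b ∧ 1 ≤ u (JetVar.D a (Fin.last d)) ∧
              1 ≤ u (JetVar.D b (Fin.last d)) ∧ b < Fin.last d := by
          rcases lt_or_gt_of_ne hji with h | h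
          · exact ⟨j, i, h, hj1, hi1, hilt⟩
          · exact ⟨i, j, h, hi1, hj1, hjlt⟩
        have hne : JetVar.D a (Fin.last d) ≠ JetVar.D b (Fin.last d) := by
          simp [ne_of_lt hab]
        have hu := decomp2 u (JetVar.D a (Fin.last d)) (JetVar.D b (Fin.last d)) hne ha1 hb1
        set c := u - Finsupp.single (JetVar.D a (Fin.last d)) 1
            - Finsupp.single (JetVar.D b (Fin.last d)) 1 with hcdef
        set u' := c + Finsupp.single (JetVar.D a b) 1
            + Finsupp.single (JetVar.D a (Fin.last d)) 1 with hu'def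
        have hstep : FormStep d (monomial u 1) (monomial u' 1) := by
          rw [hu, hu'def]
          exact step_diag_mono c a b hab hblt
        have hcleg : ∀ x ∈ c.support, x.legal := fun x hx =>
          hleg x (Finsupp.support_tsub (Finsupp.support_tsub hx))
        have hu'leg : ∀ x ∈ u'.support, x.legal := by
          rw [hu'def]
          exact legal_add3 c _ _ hcleg hab (lt_trans hab hblt)
        have h1 : u (JetVar.K (Fin.last d)) = c (JetVar.K (Fin.last d)) := by
          rw [hu]
          simp [Finsupp.single_apply]
        have h2 : u' (JetVar.K (Fin.last d)) = c (JetVar.K (Fin.last d)) := by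
          rw [hu'def]
          simp [Finsupp.single_apply]
        have h3 : Ecount d u = Ecount d c + 2 := by
          rw [hu, Ecount_add, Ecount_add, Ecount_single_D_last, Ecount_single_D_last]
        have h4 : Ecount d u' = Ecount d c + 1 := by
          rw [hu'def, Ecount_add, Ecount_add,
            Ecount_single_D_ne a b (ne_of_lt hblt), Ecount_single_D_last]
        obtain ⟨w, hw, p, hp, hch⟩ := IH (n - 1) (by omega) u' (by omega) hu'leg (by omega)
        refine ⟨w, hw, p, hp, ?_⟩
        rcases hch with h | h
        · exact Or.inl (Relation.ReflTransGen.head hstep h)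
        · exact Or.inr (Relation.ReflTransGen.head hstep h)
      · -- terminal case: `u = w + D_{i,last}`
        have hE1 : Ecount d u = 1 := by omega
        have hii : u (JetVar.D i (Fin.last d)) = 1 := by omega
        have hu := decomp1 u (JetVar.D i (Fin.last d)) 1 hi1
        set w := u - Finsupp.single (JetVar.D i (Fin.last d)) 1 with hwdef
        have hwleg : ∀ x ∈ w.support, x.legal := fun x hx =>
          hleg x (Finsupp.support_tsub hx)
        have hwK : w (JetVar.K (Fin.last d)) = 0 := by
          rw [hwdef]
          simp [Finsupp.single_apply, hk0]
        have hsplit := erase_sum_split u i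
        have herase : ∑ j ∈ Finset.univ.erase i, u (JetVar.D j (Fin.last d)) = 0 := by
          omega
        have hwD : ∀ j, w (JetVar.D j (Fin.last d)) = 0 := by
          intro j
          by_cases hji : j = i
          · subst hji
            rw [hwdef]
            simp [Finsupp.single_apply, hii]
          · have hj0 : u (JetVar.D j (Fin.last d)) = 0 := by
              have := (Finset.sum_eq_zero_iff.1 herase) j
                (Finset.mem_erase.2 ⟨hji, Finset.mem_univ j⟩)
              exact this
            rw [hwdef]
            simp only [Finsupp.tsub_apply, Finsupp.single_apply]
            rw [hj0]
            omega
        refine ⟨w, not_usesLast_of w hwleg hwK hwD, i, hilt, Or.inl ?_⟩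
        rw [hu, mono_mul_X]

end JetAux

/-- Every legal monomial involving the last index can be rewritten, by finitely many
applications of the Formularium rules, into the form `± M · D_{i,last}` (`i < last`)
or `M · K_last^k` (`k ≥ 1`), with `M` a monomial not involving the last index. -/


theorem formularium_normal_form (d : ℕ) (v : JetVar d →₀ ℕ)
    (hlegal : ∀ x ∈ v.support, x.legal)
    (hlast : ∃ x ∈ v.support, x.usesLast) :
    ∃ w : JetVar d →₀ ℕ, (∀ x ∈ w.support, x.legal ∧ ¬ x.usesLast) ∧
      ((∃ i : Fin (d + 1), i < Fin.last d ∧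
          (Relation.ReflTransGen (FormStep d) (monomial v (1 : ℚ))
              (monomial w 1 * X (.D i (Fin.last d))) ∨
           Relation.ReflTransGen (FormStep d) (monomial v (1 : ℚ))
              (-(monomial w 1 * X (.D i (Fin.last d)))))) ∨
        (∃ k : ℕ, 1 ≤ k ∧
          Relation.ReflTransGen (FormStep d) (monomial v (1 : ℚ))
            (monomial w 1 * X (.K (Fin.last d)) ^ k))) := by
  by_cases hE : 1 ≤ JetAux.Ecount d v
  · obtain ⟨w, hw, i, hi, hch⟩ := JetAux.main_red d
      (v (JetVar.K (Fin.last d)) + JetAux.Ecount d v) v rfl hlegal hE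
    exact ⟨w, hw, Or.inl ⟨i, hi, hch⟩⟩
  · have hE0 : JetAux.Ecount d v = 0 := by omega
    have hD0 : ∀ i, v (JetVar.D i (Fin.last d)) = 0 := by
      intro i
      have := JetAux.term_le_Ecount v i
      omega
    obtain ⟨x, hx, hul⟩ := hlast
    have hk : 1 ≤ v (JetVar.K (Fin.last d)) := by
      cases x with
      | K i =>
          simp only [JetVar.usesLast] at hul
          subst hul
          have := Finsupp.mem_support_iff.1 hx
          omega
      | D a b =>
          have hlg := hlegal _ hx
          simp only [JetVar.legal] at hlg
          simp only [JetVar.usesLast] at hul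
          rcases hul with h | h
          · subst h
            exact absurd hlg (not_lt.2 (Fin.le_last b))
          · subst h
            exact absurd (hD0 a) (Finsupp.mem_support_iff.1 hx)
    have hv := JetAux.decomp1 v (JetVar.K (Fin.last d))
      (v (JetVar.K (Fin.last d))) (le_refl _)
    set w := v - Finsupp.single (JetVar.K (Fin.last d)) (v (JetVar.K (Fin.last d)))
      with hwdef
    have hwleg : ∀ x ∈ w.support, x.legal := fun x hx =>
      hlegal x (Finsupp.support_tsub hx)
    have hwK : w (JetVar.K (Fin.last d)) = 0 := by
      rw [hwdef]
      simp [Finsupp.single_apply]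
    have hwD : ∀ i, w (JetVar.D i (Fin.last d)) = 0 := by
      intro i
      rw [hwdef]
      simp [Finsupp.single_apply, hD0]
    refine ⟨w, JetAux.not_usesLast_of w hwleg hwK hwD,
      Or.inr ⟨v (JetVar.K (Fin.last d)), hk, ?_⟩⟩
    rw [X_pow_eq_monomial, monomial_mul, mul_one, ← hv]
end
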